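/- arXiv:1608.06874 — 9 statements merged into one kernel-verified Lean document; each statement's English description precedes it below -/
import Mathlib

section
/- Let d ≥ 2 and let S be a finite set of n points in the unit cube [0,1]^d (n ≥ 1). Then there exist a, b : Fin d → ℝ with 0 ≤ a i < b i ≤ 1 for every i, such that the open box ∏_{i<d} (a i, b i) contains no point of S, and its volume satisfies ∏_{i<d} (b i − a i) ≥ (log₂ d) / (4 · (n + log₂ d)). -/
open Finset

lemma indep_card {α ι : Type*} [DecidableEq α] [Fintype ι] [Nontrivial ι]
    (T : Finset α) (P : ι → α → Prop)
    (H : ∀ i i' : ι, i ≠ i' → ∀ β β' : Bool,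
      ∃ p ∈ T, (P i p ↔ β = true) ∧ (P i' p ↔ β' = true)) :
    Fintype.card ι * 2 ≤ 2 ^ T.card := by
  classical
  set f : ι × Bool → Finset α :=
    fun x => T.filter (fun p => P x.1 p ↔ x.2 = true) with hf
  have hmaps : ∀ x : ι × Bool, x ∈ (univ : Finset (ι × Bool)) → f x ∈ T.powerset :=
    fun x _ => mem_powerset.2 (filter_subset _ _)
  have hinj : Set.InjOn f (univ : Finset (ι × Bool)) := by
    rintro ⟨i, β⟩ - ⟨i', β'⟩ - hEq
    have h1 : i = i' := by
      by_contra hne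
      obtain ⟨p, hpT, hp1, hp2⟩ := H i i' hne β (!β')
      have hpf : p ∈ f (i, β) := mem_filter.2 ⟨hpT, by simpa using hp1⟩
      rw [hEq] at hpf
      have h3 := (mem_filter.1 hpf).2
      cases β' <;> simp_all
    subst h1
    have h2 : β = β' := by
      by_contra hne
      obtain ⟨i'', hi''⟩ := exists_ne i
      obtain ⟨p, hpT, hp1, hp2⟩ := H i i'' (Ne.symm hi'') β true
      have hpf : p ∈ f (i, β) := mem_filter.2 ⟨hpT, by simpa using hp1⟩
      rw [hEq] at hpf
      have h3 := (mem_filter.1 hpf).2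
      cases β <;> cases β' <;> simp_all
    subst h2; rfl
  have hcard := Finset.card_le_card_of_injOn f hmaps hinj
  simpa [Finset.card_powerset, Fintype.card_prod, mul_comm] using hcard

lemma condiff {v : ℝ} {β : Bool} (h : if β = true then (1:ℝ)/2 < v else v < 1/2) :
    ((1:ℝ)/2 < v ↔ β = true) := by
  cases β <;> simp_all <;> linarith

theorem large_empty_box (d : ℕ) (hd : 2 ≤ d) (S : Finset (Fin d → ℝ)) (n : ℕ)
    (hn : 1 ≤ n) (hcard : S.card = n)
    (hS : ∀ p ∈ S, ∀ i, p i ∈ Set.Icc (0 : ℝ) 1) :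
    ∃ a b : Fin d → ℝ,
      (∀ i, 0 ≤ a i ∧ a i < b i ∧ b i ≤ 1) ∧
      (∀ p ∈ S, ¬ (∀ i, p i ∈ Set.Ioo (a i) (b i))) ∧
      Real.logb 2 d / (4 * ((n : ℝ) + Real.logb 2 d)) ≤ ∏ i, (b i - a i) := by
  classical
  haveI : NeZero d := ⟨by omega⟩
  have h12 : (1:ℝ) < 2 := one_lt_two
  have hdR : (2:ℝ) ≤ (d:ℝ) := by exact_mod_cast hd
  set L := Real.logb 2 (d:ℝ) with hLdef
  have hL1 : (1:ℝ) ≤ L := by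
    rw [hLdef, show (1:ℝ) = Real.logb 2 2 from (Real.logb_self_eq_one h12).symm]
    exact Real.logb_le_logb_of_le h12 (by norm_num) hdR
  have hL0 : (0:ℝ) < L := lt_of_lt_of_le one_pos hL1
  have hn0 : (0:ℝ) < (n:ℝ) := by
    have : 0 < n := by omega
    exact_mod_cast this
  by_cases hd2 : d = 2
  · -- dimension 2 : one-dimensional pigeonhole, gap of length 1/(n+1)
    subst hd2
    have hL : L = 1 := by
      rw [hLdef]
      norm_num
    have hn1 : (0:ℝ) < (n:ℝ) + 1 := by positivity
    have hslab : ∃ j : ℕ, j < n + 1 ∧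
        ∀ p ∈ S, ¬((j:ℝ)/((n:ℝ)+1) < p 0 ∧ p 0 < ((j:ℝ)+1)/((n:ℝ)+1)) := by
      by_contra hc
      push_neg at hc
      set g : ℕ → (Fin 2 → ℝ) :=
        fun j => if h : j < n + 1 then (hc j h).choose else (fun _ => 0) with hg
      have hmapsto : ∀ j ∈ Finset.range (n+1), g j ∈ S := by
        intro j hj
        rw [Finset.mem_range] at hj
        simp only [hg, dif_pos hj]
        exact (hc j hj).choose_spec.1
      have hcardlt : S.card < (Finset.range (n+1)).card := by
        rw [hcard, Finset.card_range]; omega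
      obtain ⟨j, hj, j', hj', hne, heq⟩ :=
        Finset.exists_ne_map_eq_of_card_lt_of_maps_to hcardlt hmapsto
      rw [Finset.mem_range] at hj hj'
      have spec : ∀ k, ∀ hk : k < n+1,
          (k:ℝ)/((n:ℝ)+1) < (g k) 0 ∧ (g k) 0 < ((k:ℝ)+1)/((n:ℝ)+1) := by
        intro k hk
        simp only [hg, dif_pos hk]
        exact (hc k hk).choose_spec.2
      have h1 := spec j hj
      have h2 := spec j' hj'
      rw [heq] at h1
      rcases hne.lt_or_gt with h | h
      · have hc1 : ((j:ℝ)+1) ≤ (j':ℝ) := by exact_mod_cast h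
        have hle : ((j:ℝ)+1)/((n:ℝ)+1) ≤ (j':ℝ)/((n:ℝ)+1) := by gcongr
        linarith [h1.2, h2.1]
      · have hc1 : ((j':ℝ)+1) ≤ (j:ℝ) := by exact_mod_cast h
        have hle : ((j':ℝ)+1)/((n:ℝ)+1) ≤ (j:ℝ)/((n:ℝ)+1) := by gcongr
        linarith [h1.1, h2.2]
    obtain ⟨j, hj, hjempty⟩ := hslab
    refine ⟨(fun i => if i = 0 then (j:ℝ)/((n:ℝ)+1) else 0),
           (fun i => if i = 0 then ((j:ℝ)+1)/((n:ℝ)+1) else 1), ?_, ?_, ?_⟩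
    · intro i
      by_cases h : i = 0
      · simp only [h, eq_self_iff_true, if_true]
        refine ⟨by positivity, ?_, ?_⟩
        · rw [div_lt_div_iff₀ hn1 hn1]; nlinarith
        · rw [div_le_one hn1]
          have : (j:ℝ) + 1 ≤ (n:ℝ) + 1 := by
            have : j ≤ n := by omega
            have := (Nat.cast_le (α := ℝ)).2 this
            linarith
          linarith
      · simp [h]
    · intro p hp hall
      have h0 := hall 0
      rw [Set.mem_Ioo] at h0
      simp only [eq_self_iff_true, if_true] at h0
      exact hjempty p hp h0
    · have hbma : ∀ i : Fin 2,
          ((if i = 0 then ((j:ℝ)+1)/((n:ℝ)+1) else 1) -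
           (if i = 0 then (j:ℝ)/((n:ℝ)+1) else 0)) = if i = 0 then 1/((n:ℝ)+1) else 1 := by
        intro i
        by_cases h : i = 0
        · simp only [h, eq_self_iff_true, if_true]
          rw [div_sub_div_same]
          ring_nf
        · simp [h]
      rw [Finset.prod_congr rfl (fun i _ => hbma i)]
      rw [Finset.prod_ite_eq' Finset.univ (0 : Fin 2) (fun _ => 1/((n:ℝ)+1))]
      simp only [Finset.mem_univ, if_pos]
      rw [hL]
      rw [div_le_div_iff₀ (by positivity) (by positivity)]
      nlinarith
  · -- main case : d ≥ 3
    have hd3 : 3 ≤ d := by omega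
    set m : ℕ := ⌊(n:ℝ)/L⌋₊ + 1 with hm
    have hm0 : (0:ℝ) < (m:ℝ) := by
      have : 0 < m := Nat.succ_pos _
      exact_mod_cast this
    by_cases hbox : ∃ j : ℕ, j < m ∧ ∃ i₁ i₂ : Fin d, i₁ ≠ 0 ∧ i₂ ≠ 0 ∧ i₁ ≠ i₂ ∧
        ∃ β₁ β₂ : Bool, ∀ p ∈ S,
          ¬(((j:ℝ)/(m:ℝ) < p 0 ∧ p 0 < ((j:ℝ)+1)/(m:ℝ)) ∧
            (if β₁ = true then (1:ℝ)/2 < p i₁ else p i₁ < 1/2) ∧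
            (if β₂ = true then (1:ℝ)/2 < p i₂ else p i₂ < 1/2))
    · obtain ⟨j, hjm, i₁, i₂, hi₁, hi₂, hi₁₂, β₁, β₂, hempty⟩ := hbox
      have hjm1 : ((j:ℝ)+1) ≤ (m:ℝ) := by exact_mod_cast hjm
      refine ⟨(fun i => if i = 0 then (j:ℝ)/(m:ℝ) else if i = i₁ then (if β₁ = true then 1/2 else 0)
                else if i = i₂ then (if β₂ = true then 1/2 else 0) else 0),
             (fun i => if i = 0 then ((j:ℝ)+1)/(m:ℝ) else if i = i₁ then (if β₁ = true then 1 else 1/2)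
                else if i = i₂ then (if β₂ = true then 1 else 1/2) else 1), ?_, ?_, ?_⟩
      · intro i
        by_cases h0 : i = 0
        · simp only [h0, eq_self_iff_true, if_true]
          refine ⟨by positivity, ?_, ?_⟩
          · rw [div_lt_div_iff₀ hm0 hm0]; nlinarith
          · rw [div_le_one hm0]; exact hjm1
        · by_cases h1 : i = i₁
          · cases β₁ <;> simp [h1, hi₁] <;> norm_num
          · by_cases h2 : i = i₂
            · cases β₂ <;> simp [h2, hi₂, (Ne.symm hi₁₂ : i₂ ≠ i₁)] <;> norm_num
            · simp [h0, h1, h2]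
      · intro p hp hall
        apply hempty p hp
        have h0 := hall 0
        have ha := hall i₁
        have hb := hall i₂
        simp only [Set.mem_Ioo] at h0 ha hb
        simp only [eq_self_iff_true, if_true] at h0
        simp [hi₁] at ha
        simp [hi₂, (Ne.symm hi₁₂ : i₂ ≠ i₁)] at hb
        refine ⟨h0, ?_, ?_⟩
        · cases β₁
          · simpa using ha.2
          · simpa using ha.1
        · cases β₂
          · simpa using hb.2
          · simpa using hb.1
      · -- volume
        have hbma : ∀ i : Fin d,
            ((if i = 0 then ((j:ℝ)+1)/(m:ℝ) else if i = i₁ then (if β₁ = true then 1 else 1/2)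
                else if i = i₂ then (if β₂ = true then 1 else 1/2) else 1) -
             (if i = 0 then (j:ℝ)/(m:ℝ) else if i = i₁ then (if β₁ = true then 1/2 else 0)
                else if i = i₂ then (if β₂ = true then 1/2 else 0) else 0))
            = (if i = 0 then 1/(m:ℝ) else if i = i₁ then 1/2 else if i = i₂ then 1/2 else 1) := by
          intro i
          by_cases h0 : i = 0
          · simp only [h0, eq_self_iff_true, if_true]
            rw [div_sub_div_same]; ring_nf
          · by_cases h1 : i = i₁
            · cases β₁ <;> simp [h1, hi₁] <;> norm_num
            · by_cases h2 : i = i₂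
              · cases β₂ <;> simp [h2, hi₂, (Ne.symm hi₁₂ : i₂ ≠ i₁)] <;> norm_num
              · simp [h0, h1, h2]
        rw [Finset.prod_congr rfl (fun i _ => hbma i)]
        have hsplit := Finset.prod_mul_prod_compl ({0, i₁, i₂} : Finset (Fin d))
          (fun i => (if i = 0 then 1/(m:ℝ) else if i = i₁ then 1/2 else if i = i₂ then 1/2 else 1))
        have h0T : (0 : Fin d) ∉ ({i₁, i₂} : Finset (Fin d)) := by
          simp [Ne.symm hi₁, Ne.symm hi₂, eq_comm]
        have h1T : i₁ ∉ ({i₂} : Finset (Fin d)) := by simp [hi₁₂]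
        have hTprod : ∏ i ∈ ({0, i₁, i₂} : Finset (Fin d)),
            (if i = 0 then 1/(m:ℝ) else if i = i₁ then 1/2 else if i = i₂ then 1/2 else 1)
            = 1/(m:ℝ) * (1/2 * (1/2)) := by
          rw [show ({0, i₁, i₂} : Finset (Fin d)) = insert 0 (insert i₁ {i₂}) from rfl]
          rw [Finset.prod_insert h0T, Finset.prod_insert h1T, Finset.prod_singleton]
          rw [if_pos rfl, if_neg hi₁, if_pos rfl, if_neg hi₂, if_neg (Ne.symm hi₁₂), if_pos rfl]
        have hCprod : ∏ i ∈ (({0, i₁, i₂} : Finset (Fin d))ᶜ),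
            (if i = 0 then 1/(m:ℝ) else if i = i₁ then 1/2 else if i = i₂ then 1/2 else 1) = 1 := by
          apply Finset.prod_eq_one
          intro i hi
          simp only [Finset.mem_compl, Finset.mem_insert, Finset.mem_singleton, not_or] at hi
          rw [if_neg hi.1, if_neg hi.2.1, if_neg hi.2.2]
        rw [← hsplit, hTprod, hCprod, mul_one]
        -- L/(4(n+L)) ≤ 1/m * (1/2 * 1/2)
        have hfloor : (⌊(n:ℝ)/L⌋₊ : ℝ) * L ≤ (n:ℝ) := by
          have h1 : (⌊(n:ℝ)/L⌋₊ : ℝ) ≤ (n:ℝ)/L := Nat.floor_le (by positivity)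
          exact (le_div_iff₀ hL0).1 h1
        have hmL : (m:ℝ)*L ≤ (n:ℝ) + L := by
          have hmcast : (m:ℝ) = (⌊(n:ℝ)/L⌋₊:ℝ) + 1 := by
            rw [hm]; push_cast; ring
          rw [hmcast]; nlinarith
        rw [show (1:ℝ)/(m:ℝ) * (1/2 * (1/2)) = 1/(4*(m:ℝ)) by field_simp; ring]
        rw [div_le_div_iff₀ (by positivity) (by positivity)]
        nlinarith
    · exfalso
      push_neg at hbox
      set F : ℕ → Finset (Fin d → ℝ) :=
        fun j => S.filter (fun p => (j:ℝ)/(m:ℝ) < p 0 ∧ p 0 < ((j:ℝ)+1)/(m:ℝ)) with hF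
      have hkey : ∀ j ∈ Finset.range m, L ≤ ((F j).card : ℝ) := by
        intro j hj
        rw [Finset.mem_range] at hj
        haveI : Nontrivial {i : Fin d // i ≠ 0} :=
          ⟨⟨⟨⟨1, by omega⟩, by simp [Fin.ext_iff]⟩, ⟨⟨2, by omega⟩, by simp [Fin.ext_iff]⟩,
            by simp [Subtype.ext_iff, Fin.ext_iff]⟩⟩
        have hind := indep_card (F j)
          (fun (i : {i : Fin d // i ≠ 0}) p => (1:ℝ)/2 < p i.1) ?_
        · have hcι : Fintype.card {i : Fin d // i ≠ 0} = d - 1 := by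
            rw [Fintype.card_subtype_compl, Fintype.card_subtype_eq, Fintype.card_fin]
          rw [hcι] at hind
          have h2N : d ≤ 2 ^ (F j).card := by omega
          have hdle : (d:ℝ) ≤ (2:ℝ) ^ ((F j).card) := by exact_mod_cast h2N
          calc L ≤ Real.logb 2 ((2:ℝ)^((F j).card)) := by
                rw [hLdef]
                exact Real.logb_le_logb_of_le h12 (by positivity) hdle
            _ = ((F j).card : ℝ) := by
                rw [Real.logb_pow, Real.logb_self_eq_one h12, mul_one]
        · intro i i' hne β β'
          obtain ⟨p, hpS, hslab, hQ1, hQ2⟩ :=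
            hbox j hj i.1 i'.1 i.2 i'.2 (fun h => hne (Subtype.ext h)) β β'
          exact ⟨p, Finset.mem_filter.2 ⟨hpS, hslab⟩, condiff hQ1, condiff hQ2⟩
      have hdisj : ∀ x ∈ Finset.range m, ∀ y ∈ Finset.range m, x ≠ y → Disjoint (F x) (F y) := by
        intro x _ y _ hxy
        rw [Finset.disjoint_left]
        intro p hpx hpy
        have h1 := (Finset.mem_filter.1 hpx).2
        have h2 := (Finset.mem_filter.1 hpy).2
        rcases hxy.lt_or_gt with h | h
        · have hc1 : ((x:ℝ)+1) ≤ (y:ℝ) := by exact_mod_cast h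
          have hle : ((x:ℝ)+1)/(m:ℝ) ≤ (y:ℝ)/(m:ℝ) := by gcongr
          linarith [h1.2, h2.1]
        · have hc1 : ((y:ℝ)+1) ≤ (x:ℝ) := by exact_mod_cast h
          have hle : ((y:ℝ)+1)/(m:ℝ) ≤ (x:ℝ)/(m:ℝ) := by gcongr
          linarith [h1.1, h2.2]
      have hsum : ∑ j ∈ Finset.range m, (F j).card ≤ n := by
        rw [← Finset.card_biUnion hdisj]
        calc ((Finset.range m).biUnion F).card ≤ S.card :=
              Finset.card_le_card (Finset.biUnion_subset.2 fun j _ => Finset.filter_subset _ _)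
          _ = n := hcard
      have hsumR : (m:ℝ) * L ≤ (n:ℝ) := by
        have h1 : ∑ _j ∈ Finset.range m, L ≤ ∑ j ∈ Finset.range m, ((F j).card:ℝ) :=
          Finset.sum_le_sum hkey
        rw [Finset.sum_const, Finset.card_range, nsmul_eq_mul] at h1
        have h2 : (∑ j ∈ Finset.range m, ((F j).card:ℝ)) ≤ (n:ℝ) := by
          exact_mod_cast hsum
        linarith
      have hlt : (n:ℝ) < (m:ℝ)*L := by
        have h1 := Nat.lt_floor_add_one ((n:ℝ)/L)
        have hmcast : (m:ℝ) = (⌊(n:ℝ)/L⌋₊:ℝ) + 1 := by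
          rw [hm]; push_cast; ring
        rw [hmcast]
        exact (div_lt_iff₀ hL0).1 h1
      linarith
end

section
/- For every n ≥ 4, the maximum cardinality of a perfect subset of (Fin n → Fin 2) equals C(n−1, ⌊n/2⌋ − 1); that is, there exists a perfect set of functions Fin n → Fin 2 of cardinality C(n−1, ⌊n/2⌋ − 1), and every perfect set of functions Fin n → Fin 2 has cardinality at most C(n−1, ⌊n/2⌋ − 1). -/
/-- A finite set `V` of vectors `Fin n → Fin a` is `t`-wise perfect if it has at
least `t` elements and for every injective `t`-tuple of elements of `V` and every
string `α : Fin t → Fin a`, some coordinate `r` realizes `α` on the tuple. -/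
def TwisePerfect (a t n : ℕ) (V : Finset (Fin n → Fin a)) : Prop :=
  t ≤ V.card ∧
    ∀ v : Fin t → (Fin n → Fin a), Function.Injective v → (∀ j, v j ∈ V) →
      ∀ α : Fin t → Fin a, ∃ r : Fin n, ∀ j, v j r = α j

open Finset FinsetFamily

/-- local LYM, upward form: a `k`-sized family with `2k < n` has at least as large upper shadow. -/
lemma card_le_card_upShadow {n k : ℕ} (𝒜 : Finset (Finset (Fin n)))
    (hk : 2 * k < n) (h : (𝒜 : Set (Finset (Fin n))).Sized k) : #𝒜 ≤ #(∂⁺ 𝒜) := by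
  have hc : ((𝒜ᶜˢ : Finset (Finset (Fin n))) : Set (Finset (Fin n))).Sized (n - k) := by
    simpa using h.compls
  have h1 := Finset.card_mul_le_card_shadow_mul hc
  rw [Finset.shadow_compls, Finset.card_compls, Finset.card_compls] at h1
  simp only [Fintype.card_fin] at h1
  have hkn : k ≤ n := by omega
  have h2 : n - (n - k) + 1 = k + 1 := by omega
  rw [h2] at h1
  have h3 : #𝒜 * (k+1) ≤ #𝒜 * (n - k) := Nat.mul_le_mul_left _ (by omega)
  exact Nat.le_of_mul_le_mul_right (h3.trans h1) (by omega)

lemma pushup {n : ℕ} (hn : 1 ≤ n / 2) :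
    ∀ j : ℕ, ∀ 𝒜 : Finset (Finset (Fin n)),
    IsAntichain (· ⊆ ·) (𝒜 : Set (Finset (Fin n))) →
    (𝒜 : Set (Finset (Fin n))).Intersecting →
    (∀ A ∈ 𝒜, A.card ≤ n / 2) →
    (∀ A ∈ 𝒜, n / 2 ≤ A.card + j) →
    #𝒜 ≤ (n - 1).choose (n / 2 - 1) := by
  intro j
  induction j with
  | zero =>
    intro 𝒜 hanti hint hle hge
    have hsized : (𝒜 : Set (Finset (Fin n))).Sized (n / 2) := by
      intro A hA
      have := hle A hA
      have := hge A (by exact_mod_cast hA)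
      omega
    have := Finset.erdos_ko_rado (𝒜 := 𝒜) (r := n / 2) hint hsized le_rfl
    simpa using this
  | succ j ih =>
    intro 𝒜 hanti hint hle hge
    by_cases hcase : ∀ A ∈ 𝒜, n / 2 ≤ A.card + j
    · exact ih 𝒜 hanti hint hle hcase
    push_neg at hcase
    obtain ⟨A₀, hA₀, hA₀card⟩ := hcase
    -- the minimum size k
    set k : ℕ := n / 2 - j - 1 with hk
    have hkn : 2 * k < n := by
      have := Nat.div_mul_le_self n 2
      omega
    set 𝒜k : Finset (Finset (Fin n)) := 𝒜.filter (fun A => A.card = k) with h𝒜k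
    have h𝒜k_sub : 𝒜k ⊆ 𝒜 := Finset.filter_subset _ _
    have hcard_rest : ∀ A ∈ 𝒜 \ 𝒜k, k + 1 ≤ A.card := by
      intro A hA
      rw [Finset.mem_sdiff, h𝒜k, Finset.mem_filter] at hA
      have h1 := hge A hA.1
      have h2 : ¬ (A.card = k) := fun h => hA.2 ⟨hA.1, h⟩
      omega
    have hsizedk : ((𝒜k : Finset (Finset (Fin n))) : Set (Finset (Fin n))).Sized k := by
      intro A hA
      simp only [h𝒜k, Finset.coe_filter, Set.mem_setOf_eq] at hA
      exact hA.2
    set ℬ : Finset (Finset (Fin n)) := (𝒜 \ 𝒜k) ∪ ∂⁺ 𝒜k with hℬ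
    -- membership in upShadow gives a subset in 𝒜k
    have hup : ∀ B ∈ ∂⁺ 𝒜k, ∃ A ∈ 𝒜k, A ⊆ B ∧ B.card = k + 1 := by
      intro B hB
      obtain ⟨A, hA, hAB, hcard⟩ := Finset.mem_upShadow_iff_exists_mem_card_add_one.1 hB
      exact ⟨A, hA, hAB, by rw [hcard, hsizedk hA]⟩
    -- disjointness
    have hdisj : Disjoint (𝒜 \ 𝒜k) (∂⁺ 𝒜k) := by
      rw [Finset.disjoint_left]
      intro B hB hB'
      obtain ⟨A, hA, hAB, hBcard⟩ := hup B hB'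
      have hBA : B ∈ 𝒜 := (Finset.mem_sdiff.1 hB).1
      have hne : A ≠ B := by
        intro h; rw [h] at hA
        have := hsizedk hA
        have := hcard_rest B hB
        omega
      exact hanti (by exact_mod_cast h𝒜k_sub hA) (by exact_mod_cast hBA) hne hAB
    have hcardℬ : #𝒜 ≤ #ℬ := by
      rw [hℬ, Finset.card_union_of_disjoint hdisj]
      have h1 : #𝒜k ≤ #(∂⁺ 𝒜k) := card_le_card_upShadow 𝒜k hkn hsizedk
      have h2 : #(𝒜 \ 𝒜k) = #𝒜 - #𝒜k := Finset.card_sdiff_of_subset h𝒜k_sub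
      have h3 : #𝒜k ≤ #𝒜 := Finset.card_le_card h𝒜k_sub
      omega
    -- each member of ℬ contains a member of 𝒜
    have hcontain : ∀ B ∈ ℬ, ∃ A ∈ 𝒜, A ⊆ B := by
      intro B hB
      rcases Finset.mem_union.1 hB with h | h
      · exact ⟨B, (Finset.mem_sdiff.1 h).1, subset_rfl⟩
      · obtain ⟨A, hA, hAB, _⟩ := hup B h
        exact ⟨A, h𝒜k_sub hA, hAB⟩
    have hintℬ : (ℬ : Set (Finset (Fin n))).Intersecting := by
      intro X hX Y hY hdXY
      obtain ⟨A, hA, hAX⟩ := hcontain X (by exact_mod_cast hX)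
      obtain ⟨A', hA', hAY⟩ := hcontain Y (by exact_mod_cast hY)
      exact hint (by exact_mod_cast hA) (by exact_mod_cast hA')
        (hdXY.mono hAX hAY)
    have hantiℬ : IsAntichain (· ⊆ ·) (ℬ : Set (Finset (Fin n))) := by
      intro X hX Y hY hne hXY
      rw [Finset.mem_coe, hℬ, Finset.mem_union] at hX hY
      rcases hX with hX | hX <;> rcases hY with hY | hY
      · exact hanti (by exact_mod_cast (Finset.mem_sdiff.1 hX).1)
          (by exact_mod_cast (Finset.mem_sdiff.1 hY).1) hne hXY
      · -- X ∈ 𝒜\𝒜k, Y ∈ ∂⁺𝒜k : |X| ≥ k+1 = |Y|, X ⊆ Y ⟹ X = Y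
        obtain ⟨A, hA, hAY, hYcard⟩ := hup Y hY
        have := hcard_rest X hX
        exact hne (Finset.eq_of_subset_of_card_le hXY (by omega))
      · -- X ∈ ∂⁺𝒜k, Y ∈ 𝒜\𝒜k : A ⊆ X ⊆ Y
        obtain ⟨A, hA, hAX, hXcard⟩ := hup X hX
        have hAY : A ⊆ Y := hAX.trans hXY
        have hne' : A ≠ Y := by
          intro h; rw [h] at hA
          have := hsizedk hA
          have := hcard_rest Y hY
          omega
        exact hanti (by exact_mod_cast h𝒜k_sub hA)
          (by exact_mod_cast (Finset.mem_sdiff.1 hY).1) hne' hAY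
      · obtain ⟨_, _, _, hXcard⟩ := hup X hX
        obtain ⟨_, _, _, hYcard⟩ := hup Y hY
        exact hne (Finset.eq_of_subset_of_card_le hXY (by omega))
    have hleℬ : ∀ B ∈ ℬ, B.card ≤ n / 2 := by
      intro B hB
      rcases Finset.mem_union.1 hB with h | h
      · exact hle B (Finset.mem_sdiff.1 h).1
      · obtain ⟨_, _, _, hBcard⟩ := hup B h
        omega
    have hgeℬ : ∀ B ∈ ℬ, n / 2 ≤ B.card + j := by
      intro B hB
      rcases Finset.mem_union.1 hB with h | h
      · have := hcard_rest B h
        omega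
      · obtain ⟨_, _, _, hBcard⟩ := hup B h
        omega
    exact hcardℬ.trans (ih ℬ hantiℬ hintℬ hleℬ hgeℬ)

section Family
variable {n : ℕ}

/-- The four pairwise conditions. -/
def PCond (A B : Finset (Fin n)) : Prop :=
  ¬ Disjoint A B ∧ ¬ A ⊆ B ∧ ¬ B ⊆ A ∧ A ∪ B ≠ Finset.univ

lemma pcond_symm {A B : Finset (Fin n)} (h : PCond A B) : PCond B A := by
  obtain ⟨h1, h2, h3, h4⟩ := h
  exact ⟨fun hd => h1 hd.symm, h3, h2, by rwa [Finset.union_comm]⟩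

lemma disjoint_compl_right_iff' (A B : Finset (Fin n)) : Disjoint A Bᶜ ↔ A ⊆ B := by
  rw [Finset.disjoint_left]
  simp only [Finset.mem_compl, not_not, Finset.subset_iff]

lemma compl_subset_iff' (A B : Finset (Fin n)) : Aᶜ ⊆ B ↔ A ∪ B = Finset.univ := by
  constructor
  · intro h
    apply Finset.eq_univ_iff_forall.2
    intro x
    by_cases hx : x ∈ A
    · exact Finset.mem_union_left _ hx
    · exact Finset.mem_union_right _ (h (Finset.mem_compl.2 hx))
  · intro h x hx
    rw [Finset.mem_compl] at hx
    rcases Finset.mem_union.1 (h ▸ Finset.mem_univ x) with h' | h'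
    · exact absurd h' hx
    · exact h'

lemma pcond_compl_left {A B : Finset (Fin n)} (h : PCond A B) : PCond Aᶜ B := by
  obtain ⟨h1, h2, h3, h4⟩ := h
  refine ⟨?_, ?_, ?_, ?_⟩
  · rw [disjoint_comm, disjoint_compl_right_iff']
    exact h3
  · rw [compl_subset_iff']
    exact h4
  · intro hBA
    exact h1 (Finset.disjoint_right.2 fun x hx => Finset.mem_compl.1 (hBA hx))
  · intro hu
    apply h2
    intro x hx
    rcases Finset.mem_union.1 (hu ▸ Finset.mem_univ x) with h' | h'
    · exact absurd hx (Finset.mem_compl.1 h')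
    · exact h'

lemma pcond_compl_right {A B : Finset (Fin n)} (h : PCond A B) : PCond A Bᶜ :=
  pcond_symm (pcond_compl_left (pcond_symm h))

/-- Any family satisfying the pairwise conditions has size at most `C(n-1, n/2-1)`. -/
lemma family_bound (hn : 4 ≤ n) (F : Finset (Finset (Fin n)))
    (hF : ∀ A ∈ F, ∀ B ∈ F, A ≠ B → PCond A B) (h2 : 2 ≤ #F) :
    #F ≤ (n - 1).choose (n / 2 - 1) := by
  classical
  set g : Finset (Fin n) → Finset (Fin n) :=
    fun A => if A.card ≤ n / 2 then A else Aᶜ with hg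
  have hgmem : ∀ A : Finset (Fin n), g A = A ∨ g A = Aᶜ := by
    intro A; simp only [hg]; split_ifs <;> simp
  have hPg : ∀ A ∈ F, ∀ B ∈ F, A ≠ B → PCond (g A) (g B) := by
    intro A hA B hB hne
    have h := hF A hA B hB hne
    rcases hgmem A with h1 | h1 <;> rcases hgmem B with h2' | h2' <;> rw [h1, h2']
    · exact h
    · exact pcond_compl_right h
    · exact pcond_compl_left h
    · exact pcond_compl_right (pcond_compl_left h)
  have hinj : Set.InjOn g F := by
    intro A hA B hB hgAB
    by_contra hne
    have h := hF A (by exact_mod_cast hA) B (by exact_mod_cast hB) hne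
    rcases hgmem A with h1 | h1 <;> rcases hgmem B with h2' | h2' <;>
      rw [h1, h2'] at hgAB
    · exact hne hgAB
    · subst hgAB
      exact h.1 (Finset.disjoint_left.2 fun x hx => Finset.mem_compl.1 hx)
    · apply h.1
      rw [← hgAB]
      exact Finset.disjoint_right.2 fun x hx => Finset.mem_compl.1 hx
    · exact hne (compl_injective (hgAB ▸ rfl))
  set F' : Finset (Finset (Fin n)) := F.image g with hF'
  have hcardF' : #F' = #F := Finset.card_image_of_injOn hinj
  -- every element of F' is nonempty
  have hne' : ∀ X ∈ F', X.Nonempty := by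
    intro X hX
    obtain ⟨A, hA, rfl⟩ := Finset.mem_image.1 hX
    obtain ⟨B, hB, hBA⟩ := Finset.exists_mem_ne (s := F) (by omega) A
    have h := hPg A hA B hB (Ne.symm hBA)
    rw [Finset.nonempty_iff_ne_empty]
    intro hempty
    rw [hempty] at h
    exact h.1 (Finset.disjoint_left.2 fun x hx => absurd hx (Finset.notMem_empty x))
  have hPF' : ∀ X ∈ F', ∀ Y ∈ F', X ≠ Y → PCond X Y := by
    intro X hX Y hY hne
    obtain ⟨A, hA, rfl⟩ := Finset.mem_image.1 hX
    obtain ⟨B, hB, rfl⟩ := Finset.mem_image.1 hY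
    exact hPg A hA B hB (fun h => hne (h ▸ rfl))
  have hanti : IsAntichain (· ⊆ ·) (F' : Set (Finset (Fin n))) := by
    intro X hX Y hY hne hXY
    exact (hPF' X (by exact_mod_cast hX) Y (by exact_mod_cast hY) hne).2.1 hXY
  have hint : (F' : Set (Finset (Fin n))).Intersecting := by
    intro X hX Y hY hd
    by_cases hxy : X = Y
    · subst hxy
      rw [Finset.disjoint_self_iff_empty] at hd
      exact absurd hd (Finset.nonempty_iff_ne_empty.1 (hne' X (by exact_mod_cast hX)))
    · exact (hPF' X (by exact_mod_cast hX) Y (by exact_mod_cast hY) hxy).1 hd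
  have hle : ∀ X ∈ F', X.card ≤ n / 2 := by
    intro X hX
    obtain ⟨A, hA, rfl⟩ := Finset.mem_image.1 hX
    simp only [hg]
    split_ifs with h
    · exact h
    · rw [Finset.card_compl, Fintype.card_fin]
      omega
  have := pushup (n := n) (by omega) (n / 2) F' hanti hint hle
    (fun A _ => by omega)
  omega

end Family

section Translate
variable {n : ℕ}

/-- Support of a 0/1 vector. -/
def supp (v : Fin n → Fin 2) : Finset (Fin n) := Finset.univ.filter (fun i => v i = 1)

lemma mem_supp {v : Fin n → Fin 2} {i : Fin n} : i ∈ supp v ↔ v i = 1 := by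
  simp [supp]

lemma fin2_cases (x : Fin 2) : x = 0 ∨ x = 1 := by fin_cases x <;> simp

lemma supp_injective : Function.Injective (supp (n := n)) := by
  intro u v h
  funext i
  have hiff : u i = 1 ↔ v i = 1 := by rw [← mem_supp, ← mem_supp, h]
  rcases fin2_cases (u i) with h1 | h1 <;> rcases fin2_cases (v i) with h2 | h2
  · rw [h1, h2]
  · exact absurd (hiff.mpr h2) (by rw [h1]; decide)
  · exact absurd (hiff.mp h1) (by rw [h2]; decide)
  · rw [h1, h2]

lemma twise_pair {V : Finset (Fin n → Fin 2)} (hV : TwisePerfect 2 2 n V)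
    {u v : Fin n → Fin 2} (hu : u ∈ V) (hv : v ∈ V) (huv : u ≠ v) (a b : Fin 2) :
    ∃ r : Fin n, u r = a ∧ v r = b := by
  have hinj : Function.Injective ![u, v] := by
    intro i j hij
    fin_cases i <;> fin_cases j <;> simp_all <;> exact absurd hij huv <;> try rfl
  have hmem : ∀ j : Fin 2, ![u, v] j ∈ V := by
    intro j; fin_cases j <;> simpa
  obtain ⟨r, hr⟩ := hV.2 ![u, v] hinj hmem ![a, b]
  exact ⟨r, by simpa using hr 0, by simpa using hr 1⟩

lemma perfect_upper_bound (hn : 4 ≤ n) (V : Finset (Fin n → Fin 2))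
    (hV : TwisePerfect 2 2 n V) : #V ≤ (n - 1).choose (n / 2 - 1) := by
  classical
  set F : Finset (Finset (Fin n)) := V.image supp with hF
  have hcard : #F = #V := Finset.card_image_of_injective _ supp_injective
  have h2 : 2 ≤ #F := hcard ▸ hV.1
  have hPC : ∀ A ∈ F, ∀ B ∈ F, A ≠ B → PCond A B := by
    intro A hA B hB hAB
    obtain ⟨u, hu, rfl⟩ := Finset.mem_image.1 hA
    obtain ⟨v, hv, rfl⟩ := Finset.mem_image.1 hB
    have huv : u ≠ v := fun h => hAB (h ▸ rfl)
    refine ⟨?_, ?_, ?_, ?_⟩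
    · obtain ⟨r, h1, h2⟩ := twise_pair hV hu hv huv 1 1
      exact Finset.not_disjoint_iff.2 ⟨r, mem_supp.2 h1, mem_supp.2 h2⟩
    · obtain ⟨r, h1, h2⟩ := twise_pair hV hu hv huv 1 0
      intro hsub
      have := hsub (mem_supp.2 h1)
      rw [mem_supp, h2] at this
      simp at this
    · obtain ⟨r, h1, h2⟩ := twise_pair hV hu hv huv 0 1
      intro hsub
      have := hsub (mem_supp.2 h2)
      rw [mem_supp, h1] at this
      simp at this
    · obtain ⟨r, h1, h2⟩ := twise_pair hV hu hv huv 0 0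
      intro huniv
      have hr : r ∈ supp u ∪ supp v := huniv ▸ Finset.mem_univ r
      rcases Finset.mem_union.1 hr with h | h <;> rw [mem_supp] at h
      · rw [h1] at h; simp at h
      · rw [h2] at h; simp at h
  calc #V = #F := hcard.symm
    _ ≤ (n - 1).choose (n / 2 - 1) := family_bound hn F hPC h2

end Translate

section Lower
variable {n : ℕ}

def ind (A : Finset (Fin n)) : Fin n → Fin 2 := fun i => if i ∈ A then 1 else 0

lemma ind_val {A : Finset (Fin n)} {i : Fin n} : i ∈ A → ind A i = 1 := by
  intro h; simp [ind, h]

lemma ind_val' {A : Finset (Fin n)} {i : Fin n} : i ∉ A → ind A i = 0 := by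
  intro h; simp [ind, h]

lemma ind_injective : Function.Injective (ind (n := n)) := by
  intro A B h
  ext i
  have := congrFun h i
  by_cases hA : i ∈ A <;> by_cases hB : i ∈ B <;>
    simp [ind, hA, hB] at this ⊢

lemma choose_ge_self (N : ℕ) : ∀ k, 1 ≤ k → k ≤ N / 2 → N ≤ N.choose k := by
  intro k
  induction k with
  | zero => omega
  | succ k ih =>
    intro _ h2
    by_cases hk : k = 0
    · subst hk; simp
    · have h3 : k < N / 2 := by omega
      exact (ih (by omega) (by omega)).trans (Nat.choose_le_succ_of_lt_half_left h3)

lemma perfect_lower_bound (hn : 4 ≤ n) :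
    ∃ V : Finset (Fin n → Fin 2), TwisePerfect 2 2 n V ∧
      #V = (n - 1).choose (n / 2 - 1) := by
  classical
  set z0 : Fin n := ⟨0, by omega⟩ with hz0
  set 𝒜₀ : Finset (Finset (Fin n)) :=
    (Finset.powersetCard (n / 2) Finset.univ).filter (fun A => z0 ∈ A) with h𝒜₀
  have hmem𝒜₀ : ∀ A ∈ 𝒜₀, z0 ∈ A ∧ A.card = n / 2 := by
    intro A hA
    rw [h𝒜₀, Finset.mem_filter, Finset.mem_powersetCard] at hA
    exact ⟨hA.2, hA.1.2⟩
  have hcard𝒜₀ : #𝒜₀ = (n - 1).choose (n / 2 - 1) := by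
    have herase : #(Finset.univ.erase z0) = n - 1 := by
      rw [Finset.card_erase_of_mem (Finset.mem_univ _), Finset.card_univ, Fintype.card_fin]
    rw [← herase, ← Finset.card_powersetCard (n / 2 - 1) (Finset.univ.erase z0)]
    apply Finset.card_bij' (fun A _ => A.erase z0) (fun B _ => insert z0 B)
    · intro A hA
      exact Finset.insert_erase (hmem𝒜₀ A hA).1
    · intro B hB
      rw [Finset.mem_powersetCard] at hB
      exact Finset.erase_insert (fun h => (Finset.mem_erase.1 (hB.1 h)).1 rfl)
    · intro A hA
      obtain ⟨h1, h2⟩ := hmem𝒜₀ A hA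
      rw [Finset.mem_powersetCard]
      constructor
      · exact Finset.erase_subset_erase _ (Finset.subset_univ A)
      · rw [Finset.card_erase_of_mem h1, h2]
    · intro B hB
      rw [Finset.mem_powersetCard] at hB
      have hz0B : z0 ∉ B := fun h => (Finset.mem_erase.1 (hB.1 h)).1 rfl
      rw [h𝒜₀, Finset.mem_filter, Finset.mem_powersetCard]
      refine ⟨⟨Finset.subset_univ _, ?_⟩, Finset.mem_insert_self _ _⟩
      rw [Finset.card_insert_of_notMem hz0B, hB.2]
      omega
  refine ⟨𝒜₀.image ind, ⟨?_, ?_⟩, ?_⟩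
  · -- 2 ≤ card
    rw [Finset.card_image_of_injective _ ind_injective, hcard𝒜₀]
    have h1 : n - 1 ≤ (n - 1).choose (n / 2 - 1) :=
      choose_ge_self (n - 1) (n / 2 - 1) (by omega) (by omega)
    omega
  · -- perfect property
    intro v hinj hmemv α
    obtain ⟨A, hA, hA0⟩ := Finset.mem_image.1 (hmemv 0)
    obtain ⟨B, hB, hB0⟩ := Finset.mem_image.1 (hmemv 1)
    have hvne : v 0 ≠ v 1 := fun h => by
      have := hinj h; simp at this
    have hAB : A ≠ B := fun h => hvne (by rw [← hA0, ← hB0, h])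
    obtain ⟨hzA, hcA⟩ := hmem𝒜₀ A hA
    obtain ⟨hzB, hcB⟩ := hmem𝒜₀ B hB
    have key : ∃ r : Fin n, ind A r = α 0 ∧ ind B r = α 1 := by
      rcases fin2_cases (α 0) with h0 | h0 <;> rcases fin2_cases (α 1) with h1 | h1 <;>
        rw [h0, h1]
      · -- (0,0) : complement of union nonempty
        have hinter : 1 ≤ #(A ∩ B) :=
          Finset.card_pos.2 ⟨z0, Finset.mem_inter.2 ⟨hzA, hzB⟩⟩
        have huni : #(A ∪ B) < n := by
          have := Finset.card_union_add_card_inter A B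
          have h2 := Nat.div_mul_le_self n 2
          omega
        have hcompl : ((A ∪ B)ᶜ).Nonempty := by
          rw [← Finset.card_pos, Finset.card_compl, Fintype.card_fin]
          omega
        obtain ⟨r, hr⟩ := hcompl
        rw [Finset.mem_compl, Finset.mem_union] at hr
        push_neg at hr
        exact ⟨r, ind_val' hr.1, ind_val' hr.2⟩
      · -- (0,1) : B \ A nonempty
        have : (B \ A).Nonempty := by
          rw [Finset.sdiff_nonempty]
          intro h
          exact hAB (Finset.eq_of_subset_of_card_le h (by omega)).symm
        obtain ⟨r, hr⟩ := this
        rw [Finset.mem_sdiff] at hr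
        exact ⟨r, ind_val' hr.2, ind_val hr.1⟩
      · -- (1,0) : A \ B nonempty
        have : (A \ B).Nonempty := by
          rw [Finset.sdiff_nonempty]
          intro h
          exact hAB (Finset.eq_of_subset_of_card_le h (by omega))
        obtain ⟨r, hr⟩ := this
        rw [Finset.mem_sdiff] at hr
        exact ⟨r, ind_val hr.1, ind_val' hr.2⟩
      · exact ⟨z0, ind_val hzA, ind_val hzB⟩
    obtain ⟨r, hr0, hr1⟩ := key
    refine ⟨r, fun j => ?_⟩
    fin_cases j
    · exact (show v 0 r = α 0 by rw [← hA0]; exact hr0)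
    · exact (show v 1 r = α 1 by rw [← hB0]; exact hr1)
  · rw [Finset.card_image_of_injective _ ind_injective, hcard𝒜₀]

end Lower

theorem max_perfect_card (n : ℕ) (hn : 4 ≤ n) :
    IsGreatest {k | ∃ V : Finset (Fin n → Fin 2), TwisePerfect 2 2 n V ∧ V.card = k}
      (Nat.choose (n - 1) (n / 2 - 1)) := by
  constructor
  · obtain ⟨V, hV, hcard⟩ := perfect_lower_bound hn
    exact ⟨V, hV, hcard⟩
  · rintro k ⟨V, hV, rfl⟩
    exact perfect_upper_bound hn V hV
end

section
/- Let a ≥ 2, t ≥ 2, n ≥ 1 and k ≥ t be integers. If a^t · C(k,t) · (1 − 1/a^t)^n < 1, then there exists a t-wise perfect subset of (Fin n → Fin a) of cardinality k. -/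
open Finset Classical in
noncomputable def agreeEquiv {a k t : ℕ} (e : Fin t → Fin k) (he : Function.Injective e)
    (α : Fin t → Fin a) (ha : 0 < a) :
    {c : Fin k → Fin a // ∀ j, c (e j) = α j} ≃ (((Set.range e)ᶜ : Set (Fin k)) → Fin a) where
  toFun c x := c.1 x.1
  invFun g := ⟨Function.extend e α (fun i => if h : i ∈ (Set.range e)ᶜ then g ⟨i, h⟩ else ⟨0, ha⟩),
    fun j => he.extend_apply _ _ _⟩
  left_inv c := by
    ext i
    by_cases hi : i ∈ Set.range e
    · obtain ⟨j, rfl⟩ := hi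
      simp [he.extend_apply, c.2 j]
    · dsimp only
      rw [Function.extend_apply' _ _ _ (by simpa [Set.mem_range] using hi), dif_pos (show i ∈ (Set.range e)ᶜ from hi)]
  right_inv g := by
    ext x
    have hx : x.1 ∉ Set.range e := x.2
    dsimp only
    rw [Function.extend_apply' _ _ _ (by simpa [Set.mem_range] using hx), dif_pos (show (x:Fin k) ∈ (Set.range e)ᶜ from hx)]

open Classical in
theorem card_agree {a k t : ℕ} (e : Fin t → Fin k) (he : Function.Injective e)
    (α : Fin t → Fin a) (ha : 0 < a) :
    Fintype.card {c : Fin k → Fin a // ∀ j, c (e j) = α j} = a ^ (k - t) := by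
  rw [Fintype.card_congr (agreeEquiv e he α ha), Fintype.card_fun, Fintype.card_fin,
    Fintype.card_compl_set, Set.card_range_of_injective he, Fintype.card_fin, Fintype.card_fin]

open Classical in
theorem card_disagree {a k t : ℕ} (e : Fin t → Fin k) (he : Function.Injective e)
    (α : Fin t → Fin a) (ha : 0 < a) :
    Fintype.card {c : Fin k → Fin a // ¬ ∀ j, c (e j) = α j} = a ^ k - a ^ (k - t) := by
  rw [Fintype.card_subtype_compl, card_agree e he α ha, Fintype.card_fun,
    Fintype.card_fin, Fintype.card_fin]

open Classical in
theorem card_bad {a k t n : ℕ} (e : Fin t → Fin k) (he : Function.Injective e)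
    (α : Fin t → Fin a) (ha : 0 < a) :
    Fintype.card {ω : Fin k → Fin n → Fin a // ∀ r, ¬ ∀ j, ω (e j) r = α j}
      = (a ^ k - a ^ (k - t)) ^ n := by
  have E : {ω : Fin k → Fin n → Fin a // ∀ r, ¬ ∀ j, ω (e j) r = α j}
      ≃ {f : Fin n → (Fin k → Fin a) // ∀ r, ¬ ∀ j, f r (e j) = α j} :=
    { toFun := fun ω => ⟨fun r i => ω.1 i r, ω.2⟩
      invFun := fun f => ⟨fun i r => f.1 r i, f.2⟩
      left_inv := fun _ => rfl
      right_inv := fun _ => rfl }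
  rw [Fintype.card_congr E,
    Fintype.card_congr (Equiv.subtypePiEquivPi
      (p := fun (_ : Fin n) (c : Fin k → Fin a) => ¬ ∀ j, c (e j) = α j)),
    Fintype.card_pi]
  rw [Finset.prod_const, card_disagree e he α ha, Finset.card_univ, Fintype.card_fin]

theorem arith_step (a t n k : ℕ) (ha : 2 ≤ a) (ht : 2 ≤ t) (hk : t ≤ k)
    (h : (a : ℝ) ^ t * (Nat.choose k t : ℝ) * (1 - 1 / (a : ℝ) ^ t) ^ n < 1) :
    Nat.choose k t * a ^ t * (a ^ k - a ^ (k - t)) ^ n < a ^ (k * n) := by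
  have ha0 : (0:ℝ) < (a:ℝ) ^ t := by positivity
  have h1 : 1 ≤ a ^ t := Nat.one_le_pow _ _ (by omega)
  have hR : (↑(Nat.choose k t * a ^ t * (a ^ t - 1) ^ n) : ℝ) < (↑(a ^ (t * n)) : ℝ) := by
    push_cast [Nat.cast_sub h1]
    have heq : (1 - 1 / (a : ℝ) ^ t) = ((a:ℝ)^t - 1) / (a:ℝ)^t := by field_simp
    rw [heq, div_pow] at h
    have hc : ((a:ℝ)^t - 1)^n = (((a:ℝ)^t - 1)^n / ((a:ℝ)^t)^n) * ((a:ℝ)^t)^n :=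
      (div_mul_cancel₀ _ (by positivity)).symm
    rw [pow_mul]
    calc (Nat.choose k t : ℝ) * (a:ℝ)^t * ((a:ℝ)^t - 1)^n
        = ((a:ℝ)^t * (Nat.choose k t : ℝ) * (((a:ℝ)^t - 1)^n / ((a:ℝ)^t)^n)) * ((a:ℝ)^t)^n := by
          conv_lhs => rw [hc]
          ring
      _ < 1 * ((a:ℝ)^t)^n := mul_lt_mul_of_pos_right h (by positivity)
      _ = ((a:ℝ)^t)^n := one_mul _
  have hN : Nat.choose k t * a ^ t * (a ^ t - 1) ^ n < a ^ (t * n) := by exact_mod_cast hR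
  have key : a ^ k - a ^ (k - t) = (a ^ t - 1) * a ^ (k - t) := by
    rw [Nat.sub_mul, one_mul, ← pow_add]
    congr 2
    omega
  rw [key, mul_pow, ← mul_assoc, ← pow_mul]
  have hexp : t * n + (k - t) * n = k * n := by
    have := Nat.sub_mul k t n
    have := Nat.mul_le_mul_right n hk
    omega
  calc Nat.choose k t * a ^ t * (a ^ t - 1) ^ n * a ^ ((k-t) * n)
      < a ^ (t * n) * a ^ ((k-t)*n) :=
        Nat.mul_lt_mul_of_lt_of_le hN (le_refl _) (Nat.pow_pos (by omega))
    _ = a ^ (k * n) := by rw [← pow_add, hexp]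
open Classical in
theorem exists_good {a t n k : ℕ} (ha : 0 < a)
    (hbound : Nat.choose k t * a ^ t * (a ^ k - a ^ (k - t)) ^ n < a ^ (k * n)) :
    ∃ ω : Fin k → Fin n → Fin a,
      ∀ (s : Finset (Fin k)) (hs : s.card = t) (α : Fin t → Fin a),
        ∃ r, ∀ j, ω (s.orderEmbOfFin hs j) r = α j := by
  classical
  set P : Finset {s : Finset (Fin k) // s ∈ Finset.powersetCard t (Finset.univ : Finset (Fin k))} :=
    (Finset.powersetCard t (Finset.univ : Finset (Fin k))).attach with hP
  let emb : {s : Finset (Fin k) // s ∈ Finset.powersetCard t (Finset.univ : Finset (Fin k))} → (Fin t → Fin k) :=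
    fun s => (s.1.orderEmbOfFin (Finset.mem_powersetCard_univ.mp s.2) : Fin t → Fin k)
  let Bad : Finset (Fin k → Fin n → Fin a) :=
    (P ×ˢ (Finset.univ : Finset (Fin t → Fin a))).biUnion fun p =>
      Finset.univ.filter fun ω => ∀ r, ¬ ∀ j, ω (emb p.1 j) r = p.2 j
  have hcard : Bad.card < Fintype.card (Fin k → Fin n → Fin a) := by
    have h1 : Bad.card ≤ ∑ p ∈ P ×ˢ (Finset.univ : Finset (Fin t → Fin a)),
        (Finset.univ.filter fun ω : Fin k → Fin n → Fin a => ∀ r, ¬ ∀ j, ω (emb p.1 j) r = p.2 j).card :=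
      Finset.card_biUnion_le
    have h2 : ∀ p ∈ P ×ˢ (Finset.univ : Finset (Fin t → Fin a)),
        (Finset.univ.filter fun ω : Fin k → Fin n → Fin a => ∀ r, ¬ ∀ j, ω (emb p.1 j) r = p.2 j).card
          = (a ^ k - a ^ (k - t)) ^ n := by
      intro p _
      rw [← Fintype.card_subtype]
      exact card_bad (emb p.1) (p.1.1.orderEmbOfFin _).injective p.2 ha
    rw [Finset.sum_congr rfl h2, Finset.sum_const, smul_eq_mul] at h1
    have h3 : (P ×ˢ (Finset.univ : Finset (Fin t → Fin a))).card = Nat.choose k t * a ^ t := by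
      rw [Finset.card_product, hP, Finset.card_attach, Finset.card_powersetCard,
        Finset.card_univ, Finset.card_univ, Fintype.card_fun]
      simp [Fintype.card_fin]
    rw [h3] at h1
    calc Bad.card ≤ Nat.choose k t * a ^ t * (a ^ k - a ^ (k - t)) ^ n := h1
      _ < a ^ (k * n) := hbound
      _ = Fintype.card (Fin k → Fin n → Fin a) := by
          rw [Fintype.card_fun, Fintype.card_fun, Fintype.card_fin, Fintype.card_fin,
            Fintype.card_fin, ← pow_mul, Nat.mul_comm]
  have : ∃ ω, ω ∉ Bad := by
    by_contra hc
    push_neg at hc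
    have : (Finset.univ : Finset (Fin k → Fin n → Fin a)) ⊆ Bad := fun ω _ => hc ω
    have := Finset.card_le_card this
    rw [Finset.card_univ] at this
    omega
  obtain ⟨ω, hω⟩ := this
  refine ⟨ω, fun s hs α => ?_⟩
  have hmem : (⟨s, Finset.mem_powersetCard_univ.mpr hs⟩, α) ∈ P ×ˢ (Finset.univ : Finset (Fin t → Fin a)) := by
    rw [Finset.mem_product]
    exact ⟨Finset.mem_attach _ _, Finset.mem_univ _⟩
  have hnb : ¬ ∀ r, ¬ ∀ j, ω (s.orderEmbOfFin hs j) r = α j := fun h' =>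
    hω (Finset.mem_biUnion.mpr ⟨_, hmem, Finset.mem_filter.mpr ⟨Finset.mem_univ _, h'⟩⟩)
  exact _root_.not_forall_not.mp hnb
theorem probabilistic_perfect (a t n k : ℕ) (ha : 2 ≤ a) (ht : 2 ≤ t) (hn : 1 ≤ n)
    (hk : t ≤ k)
    (h : (a : ℝ) ^ t * (Nat.choose k t : ℝ) * (1 - 1 / (a : ℝ) ^ t) ^ n < 1) :
    ∃ V : Finset (Fin n → Fin a), TwisePerfect a t n V ∧ V.card = k := by
  classical
  obtain ⟨ω, hgood⟩ := exists_good (n := n) (by omega : 0 < a) (arith_step a t n k ha ht hk h)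
  -- injectivity of ω
  have hωinj : Function.Injective ω := by
    intro i i' hii
    by_contra hne
    obtain ⟨s, hsub, hscard⟩ := Finset.exists_superset_card_eq (s := ({i, i'} : Finset (Fin k)))
      (le_trans (le_trans (Finset.card_insert_le _ _) (by simp)) ht)
      (by simpa using hk)
    have hrange := Finset.range_orderEmbOfFin s hscard
    have hi : i ∈ Set.range (s.orderEmbOfFin hscard) := by
      rw [hrange]; exact_mod_cast hsub (by simp)
    have hi' : i' ∈ Set.range (s.orderEmbOfFin hscard) := by
      rw [hrange]; exact_mod_cast hsub (by simp)
    obtain ⟨j₁, hj₁⟩ := hi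
    obtain ⟨j₂, hj₂⟩ := hi'
    have hjne : j₁ ≠ j₂ := fun hj => hne (hj₁ ▸ hj₂ ▸ hj ▸ rfl)
    set α : Fin t → Fin a := fun j => if j = j₁ then ⟨0, by omega⟩ else ⟨1, by omega⟩ with hα
    obtain ⟨r, hr⟩ := hgood s hscard α
    have h1 := hr j₁
    have h2 := hr j₂
    rw [hj₁] at h1
    rw [hj₂] at h2
    rw [hα] at h1 h2
    simp only [if_pos rfl, if_neg (Ne.symm hjne)] at h1 h2
    rw [hii, h2] at h1
    exact absurd (congrArg Fin.val h1) (by simp)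
  refine ⟨Finset.image ω Finset.univ, ⟨?_, ?_⟩, ?_⟩
  · rw [Finset.card_image_of_injective _ hωinj, Finset.card_univ, Fintype.card_fin]
    exact hk
  · intro v hvinj hvmem α
    have hex : ∀ j, ∃ i, ω i = v j := by
      intro j
      have := hvmem j
      simp only [Finset.mem_image, Finset.mem_univ, true_and] at this
      exact this
    choose u hu using hex
    have huinj : Function.Injective u := fun j j' hj =>
      hvinj (by rw [← hu j, ← hu j', hj])
    set s : Finset (Fin k) := Finset.image u Finset.univ with hs
    have hscard : s.card = t := by
      rw [hs, Finset.card_image_of_injective _ huinj, Finset.card_univ, Fintype.card_fin]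
    have hrange := Finset.range_orderEmbOfFin s hscard
    have hex2 : ∀ j, ∃ j', s.orderEmbOfFin hscard j' = u j := by
      intro j
      have : u j ∈ Set.range (s.orderEmbOfFin hscard) := by
        rw [hrange, hs]
        exact_mod_cast Finset.mem_image_of_mem u (Finset.mem_univ j)
      exact this
    choose σ hσ using hex2
    have hσinj : Function.Injective σ := fun j j' hj =>
      huinj ((hσ j).symm.trans (hj ▸ hσ j'))
    have hσbij : Function.Bijective σ := Finite.injective_iff_bijective.mp hσinj
    set σE := Equiv.ofBijective σ hσbij with hσE
    obtain ⟨r, hr⟩ := hgood s hscard (α ∘ σE.symm)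
    refine ⟨r, fun j => ?_⟩
    have := hr (σ j)
    rw [hσ j, hu j] at this
    rw [this]
    show α (σE.symm (σE j)) = α j
    rw [Equiv.symm_apply_apply]
  · rw [Finset.card_image_of_injective _ hωinj, Finset.card_univ, Fintype.card_fin]
end

section
/- Let a ≥ 2 and t ≥ 2 be integers and let 0 < ε < 1/a be a real number. Then there exists n₀ such that for every n ≥ n₀, there exists a t-wise perfect subset of (Fin n → Fin a) of cardinality at least (1/a − ε) · ( a / (a^t − 1)^{1/t} )^n. In particular, the real number λ₁ = a / (a^t − 1)^{1/t} satisfies λ₁ > 1. -/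
open Finset Filter

lemma exists_good_tuple (a t n m : ℕ) (ha : 1 ≤ a)
    (hcount : m ^ 2 * (a ^ n) ^ (m - 1) +
        m ^ t * a ^ t * ((a ^ t - 1) ^ n * (a ^ n) ^ (m - t)) < (a ^ n) ^ m) :
    ∃ x : Fin m → Fin n → Fin a, Function.Injective x ∧
      ∀ j : Fin t → Fin m, Function.Injective j →
        ∀ α : Fin t → Fin a, ∃ r : Fin n, ∀ k, x (j k) r = α k := by
  classical
  by_contra hcon
  push_neg at hcon
  set X := (Fin m → Fin n → Fin a) with hX
  set P1 : Finset (Fin m × Fin m) := univ.filter (fun p => p.1 ≠ p.2) with hP1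
  set P2 : Finset ((Fin t → Fin m) × (Fin t → Fin a)) :=
    univ.filter (fun p => Function.Injective p.1) with hP2
  set E : Fin m × Fin m → Finset X := fun p => univ.filter (fun x => x p.1 = x p.2) with hE
  set F : (Fin t → Fin m) × (Fin t → Fin a) → Finset X :=
    fun p => univ.filter (fun x => ∀ r, ∃ k, x (p.1 k) r ≠ p.2 k) with hF
  have cover : (univ : Finset X) ⊆ P1.biUnion E ∪ P2.biUnion F := by
    intro x _
    by_cases hx : Function.Injective x
    · obtain ⟨j, hj, α, hα⟩ := hcon x hx
      refine mem_union_right _ (mem_biUnion.2 ⟨(j, α), ?_, ?_⟩)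
      · simp [hP2, hj]
      · simp only [hF, mem_filter, mem_univ, true_and]
        exact hα
    · rw [Function.not_injective_iff] at hx
      obtain ⟨i, j, hxe, hne⟩ := hx
      refine mem_union_left _ (mem_biUnion.2 ⟨(i, j), ?_, ?_⟩)
      · simp [hP1, hne]
      · simp only [hE, mem_filter, mem_univ, true_and]
        exact hxe
  have hEcard : ∀ p ∈ P1, (E p).card ≤ (a ^ n) ^ (m - 1) := by
    intro p hp
    have hne : p.1 ≠ p.2 := by simpa [hP1] using hp
    have : (E p).card = Fintype.card {x // x ∈ E p} := (Fintype.card_coe _).symm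
    rw [this]
    have hinj : Function.Injective
        (fun x : {x // x ∈ E p} => (fun k : {k : Fin m // k ≠ p.1} => x.1 k.1)) := by
      rintro ⟨x, hx⟩ ⟨y, hy⟩ hxy
      simp only [hE, mem_filter, mem_univ, true_and] at hx hy
      apply Subtype.ext
      funext i r
      by_cases hi : i = p.1
      · subst hi
        have h2 : x p.2 = y p.2 := congrFun hxy ⟨p.2, Ne.symm hne⟩
        have h3 : x p.1 = y p.1 := by rw [hx, hy, h2]
        exact congrFun h3 r
      · exact congrFun (congrFun hxy ⟨i, hi⟩) r
    calc Fintype.card {x // x ∈ E p}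
        ≤ Fintype.card ({k : Fin m // k ≠ p.1} → Fin n → Fin a) :=
          Fintype.card_le_of_injective _ hinj
      _ = (a ^ n) ^ (m - 1) := by
          simp [Fintype.card_fun, Fintype.card_subtype_compl]
  have hFcard : ∀ p ∈ P2, (F p).card ≤ (a ^ t - 1) ^ n * (a ^ n) ^ (m - t) := by
    intro p hp
    have hj : Function.Injective p.1 := by simpa [hP2] using hp
    have hcoe : (F p).card = Fintype.card {x // x ∈ F p} := (Fintype.card_coe _).symm
    rw [hcoe]
    have hmem : ∀ (x : {x // x ∈ F p}) (r : Fin n),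
        (fun k => x.1 (p.1 k) r) ≠ p.2 := by
      rintro ⟨x, hx⟩ r h
      simp only [hF, mem_filter, mem_univ, true_and] at hx
      obtain ⟨k, hk⟩ := hx r
      exact hk (congrFun h k)
    have hinj : Function.Injective (fun x : {x // x ∈ F p} =>
        ((fun r => (⟨fun k => x.1 (p.1 k) r, hmem x r⟩ : {β : Fin t → Fin a // β ≠ p.2})),
         (fun i : {i : Fin m // i ∉ Set.range p.1} => fun r => x.1 i.1 r)) ) := by
      rintro ⟨x, hx⟩ ⟨y, hy⟩ hxy
      simp only [Prod.mk.injEq] at hxy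
      apply Subtype.ext
      funext i r
      by_cases hi : i ∈ Set.range p.1
      · obtain ⟨k, rfl⟩ := hi
        have h1 := congrFun hxy.1 r
        have h2 := congrArg Subtype.val h1
        exact congrFun h2 k
      · exact congrFun (congrFun hxy.2 ⟨i, hi⟩) r
    have hcard1 : Fintype.card {β : Fin t → Fin a // β ≠ p.2} = a ^ t - 1 := by
      simp [Fintype.card_subtype_compl, Fintype.card_fun]
    have hcard2 : Fintype.card {i : Fin m // i ∉ Set.range p.1} ≤ m - t := by
      have h1 : Fintype.card {i : Fin m // i ∉ Set.range p.1}
          = m - Fintype.card {i : Fin m // i ∈ Set.range p.1} := by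
        rw [Fintype.card_subtype_compl]
        simp
      have h2 : t ≤ Fintype.card {i : Fin m // i ∈ Set.range p.1} := by
        have : Function.Injective (fun k : Fin t =>
            (⟨p.1 k, Set.mem_range_self k⟩ : {i : Fin m // i ∈ Set.range p.1})) := by
          intro k k' hkk'
          exact hj (congrArg Subtype.val hkk')
        simpa using Fintype.card_le_of_injective _ this
      omega
    calc Fintype.card {x // x ∈ F p}
        ≤ Fintype.card ((Fin n → {β : Fin t → Fin a // β ≠ p.2}) ×
            ({i : Fin m // i ∉ Set.range p.1} → Fin n → Fin a)) :=
          Fintype.card_le_of_injective _ hinj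
      _ ≤ (a ^ t - 1) ^ n * (a ^ n) ^ (m - t) := by
          rw [Fintype.card_prod, Fintype.card_fun, Fintype.card_fun, hcard1]
          simp only [Fintype.card_fin, Fintype.card_fun]
          exact Nat.mul_le_mul_left _ (Nat.pow_le_pow_right (Nat.one_le_pow _ _ ha) hcard2)
  have huniv : (univ : Finset X).card = (a ^ n) ^ m := by
    simp [hX, Fintype.card_fun]
  have hP1card : P1.card ≤ m ^ 2 := by
    calc P1.card ≤ (univ : Finset (Fin m × Fin m)).card := card_filter_le _ _
      _ = m ^ 2 := by simp [sq]
  have hP2card : P2.card ≤ m ^ t * a ^ t := by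
    calc P2.card ≤ (univ : Finset ((Fin t → Fin m) × (Fin t → Fin a))).card := card_filter_le _ _
      _ = m ^ t * a ^ t := by simp [Fintype.card_fun]
  have : (a ^ n) ^ m ≤ m ^ 2 * (a ^ n) ^ (m - 1) +
      m ^ t * a ^ t * ((a ^ t - 1) ^ n * (a ^ n) ^ (m - t)) := by
    calc (a ^ n) ^ m = (univ : Finset X).card := huniv.symm
      _ ≤ (P1.biUnion E ∪ P2.biUnion F).card := card_le_card cover
      _ ≤ (P1.biUnion E).card + (P2.biUnion F).card := card_union_le _ _
      _ ≤ (∑ p ∈ P1, (E p).card) + ∑ p ∈ P2, (F p).card :=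
          Nat.add_le_add (card_biUnion_le) (card_biUnion_le)
      _ ≤ P1.card * (a ^ n) ^ (m - 1) +
          P2.card * ((a ^ t - 1) ^ n * (a ^ n) ^ (m - t)) := by
          refine Nat.add_le_add ?_ ?_
          · calc (∑ p ∈ P1, (E p).card) ≤ ∑ _p ∈ P1, (a ^ n) ^ (m - 1) :=
                Finset.sum_le_sum hEcard
              _ = P1.card * (a ^ n) ^ (m - 1) := by rw [Finset.sum_const, smul_eq_mul]
          · calc (∑ p ∈ P2, (F p).card) ≤ ∑ _p ∈ P2, ((a ^ t - 1) ^ n * (a ^ n) ^ (m - t)) :=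
                Finset.sum_le_sum hFcard
              _ = P2.card * _ := by rw [Finset.sum_const, smul_eq_mul]
      _ ≤ m ^ 2 * (a ^ n) ^ (m - 1) +
          m ^ t * a ^ t * ((a ^ t - 1) ^ n * (a ^ n) ^ (m - t)) :=
          Nat.add_le_add (Nat.mul_le_mul_right _ hP1card) (Nat.mul_le_mul_right _ hP2card)
  omega

theorem perfect_exponential_lower (a t : ℕ) (ha : 2 ≤ a) (ht : 2 ≤ t)
    (ε : ℝ) (hε : 0 < ε) (hεa : ε < 1 / (a : ℝ)) :
    1 < (a : ℝ) / ((a : ℝ) ^ t - 1) ^ ((1 : ℝ) / t) ∧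
    ∃ n₀ : ℕ, ∀ n : ℕ, n₀ ≤ n →
      ∃ V : Finset (Fin n → Fin a), TwisePerfect a t n V ∧
        (1 / (a : ℝ) - ε) * ((a : ℝ) / ((a : ℝ) ^ t - 1) ^ ((1 : ℝ) / t)) ^ n ≤
          (V.card : ℝ) := by
  have hA2 : (2 : ℝ) ≤ (a : ℝ) := by exact_mod_cast ha
  have hA0 : (0 : ℝ) < (a : ℝ) := by linarith
  have hA1 : (1 : ℝ) < (a : ℝ) := by linarith
  have htne : (t : ℝ) ≠ 0 := by positivity
  have ht0 : t ≠ 0 := by omega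
  have hAt1 : (1 : ℝ) < (a : ℝ) ^ t := one_lt_pow₀ hA1 ht0
  have hB : (0 : ℝ) < (a : ℝ) ^ t - 1 := by linarith
  obtain ⟨Lam, hLamdef⟩ : ∃ Lam : ℝ, Lam = (a : ℝ) / ((a : ℝ) ^ t - 1) ^ ((1 : ℝ) / t) := ⟨_, rfl⟩
  rw [← hLamdef]
  obtain ⟨R, hRdef⟩ : ∃ R : ℝ, R = ((a : ℝ) ^ t - 1) ^ ((1 : ℝ) / t) := ⟨_, rfl⟩
  have hR0 : 0 < R := by rw [hRdef]; exact Real.rpow_pos_of_pos hB _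
  have hRt : R ^ t = (a : ℝ) ^ t - 1 := by
    rw [hRdef, ← Real.rpow_natCast (((a : ℝ) ^ t - 1) ^ ((1 : ℝ) / t)) t,
      ← Real.rpow_mul hB.le, one_div_mul_cancel htne, Real.rpow_one]
  obtain ⟨L, hLdef⟩ : ∃ L : ℝ, L = (a : ℝ) / R := ⟨_, rfl⟩
  have hLamL : Lam = L := by rw [hLamdef, hLdef, hRdef]
  have hL0 : 0 < L := by rw [hLdef]; exact div_pos hA0 hR0
  have hLt : L ^ t = (a : ℝ) ^ t / ((a : ℝ) ^ t - 1) := by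
    rw [hLdef, div_pow, hRt]
  have hRA : R < (a : ℝ) := by
    refine lt_of_pow_lt_pow_left₀ t hA0.le ?_
    rw [hRt]; linarith
  have hL1 : 1 < L := by rw [hLdef]; exact (one_lt_div hR0).2 hRA
  have hA4 : (4 : ℝ) ≤ (a : ℝ) ^ t := by
    calc (4 : ℝ) = 2 ^ 2 := by norm_num
      _ ≤ 2 ^ t := pow_le_pow_right₀ one_le_two ht
      _ ≤ (a : ℝ) ^ t := pow_le_pow_left₀ (by norm_num) hA2 t
  have hLt43 : L ^ t ≤ 4 / 3 := by
    rw [hLt, div_le_iff₀ hB]; linarith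
  have hL2 : L ^ 2 ≤ 4 / 3 :=
    le_trans (pow_le_pow_right₀ hL1.le ht) hLt43
  obtain ⟨c, hcdef⟩ : ∃ c : ℝ, c = 1 / (a : ℝ) - ε := ⟨_, rfl⟩
  rw [show (1 / (a : ℝ) - ε) = c from hcdef.symm]
  have hc0 : 0 < c := by rw [hcdef]; linarith
  obtain ⟨c2, hc2def⟩ : ∃ c2 : ℝ, c2 = 1 / (a : ℝ) - ε / 2 := ⟨_, rfl⟩
  have hc2c : c2 = c + ε / 2 := by rw [hc2def, hcdef]; ring
  have hc2half : c2 ≤ 1 / 2 := by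
    rw [hc2def]
    have : 1 / (a : ℝ) ≤ 1 / 2 := by
      apply one_div_le_one_div_of_le <;> linarith
    linarith
  have hAε : (a : ℝ) * ε < 1 := by
    have := (mul_lt_mul_iff_right₀ hA0).2 hεa
    rwa [mul_one_div, div_self hA0.ne'] at this
  obtain ⟨δ, hδdef⟩ : ∃ δ : ℝ, δ = (1 - (a : ℝ) * ε / 2) ^ t := ⟨_, rfl⟩
  have hδbase0 : 0 < 1 - (a : ℝ) * ε / 2 := by linarith
  have hδbase1 : 1 - (a : ℝ) * ε / 2 < 1 := by
    have : 0 < (a : ℝ) * ε := by positivity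
    linarith
  have hδ1 : δ < 1 := by rw [hδdef]; exact pow_lt_one₀ hδbase0.le hδbase1 ht0
  have hδ0 : 0 < δ := by rw [hδdef]; exact pow_pos hδbase0 t
  have hc2A : c2 * (a : ℝ) = 1 - (a : ℝ) * ε / 2 := by
    rw [hc2def]; field_simp
  have hc2Aδ : c2 ^ t * (a : ℝ) ^ t = δ := by
    rw [hδdef, ← hc2A, mul_pow]
  have hc20 : 0 < c2 := by rw [hc2c]; linarith
  -- eventual conditions
  have hLtend : Tendsto (fun n : ℕ => L ^ n) atTop atTop :=
    tendsto_pow_atTop_atTop_of_one_lt hL1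
  have h1ev : ∀ᶠ n : ℕ in atTop, 2 / ε ≤ L ^ n := hLtend.eventually_ge_atTop _
  have h3ev : ∀ᶠ n : ℕ in atTop, (t : ℝ) / c ≤ L ^ n := hLtend.eventually_ge_atTop _
  have h2ev : ∀ᶠ n : ℕ in atTop, (2 / 3 : ℝ) ^ n < 1 - δ := by
    have h0 : Tendsto (fun n : ℕ => (2 / 3 : ℝ) ^ n) atTop (nhds 0) :=
      tendsto_pow_atTop_nhds_zero_of_lt_one (by norm_num) (by norm_num)
    exact h0.eventually_lt_const (by linarith)
  obtain ⟨n₀, hn₀⟩ := eventually_atTop.1 ((h1ev.and h2ev).and h3ev)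
  refine ⟨hLamL ▸ hL1, n₀, fun n hn => ?_⟩
  obtain ⟨⟨h1, h2⟩, h3⟩ := hn₀ n hn
  have hLn0 : (0 : ℝ) < L ^ n := pow_pos hL0 n
  obtain ⟨m, hmdef⟩ : ∃ m : ℕ, m = ⌈c * L ^ n⌉₊ := ⟨_, rfl⟩
  have hm1 : c * L ^ n ≤ (m : ℝ) := hmdef ▸ Nat.le_ceil _
  have hm2 : (m : ℝ) ≤ c * L ^ n + 1 := by
    rw [hmdef]
    exact (Nat.ceil_lt_add_one (by positivity)).le
  have hε2 : 1 ≤ ε / 2 * L ^ n := by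
    have := mul_le_mul_of_nonneg_left h1 (le_of_lt (half_pos hε))
    calc (1 : ℝ) = ε / 2 * (2 / ε) := by field_simp
      _ ≤ ε / 2 * L ^ n := this
  have hm3 : (m : ℝ) ≤ c2 * L ^ n := by
    have : c2 * L ^ n = c * L ^ n + ε / 2 * L ^ n := by rw [hc2c]; ring
    linarith
  have hmL : (m : ℝ) ≤ L ^ n := by
    have : c2 * L ^ n ≤ 1 * L ^ n :=
      mul_le_mul_of_nonneg_right (by linarith) hLn0.le
    linarith
  have htm : t ≤ m := by
    have h4 : (t : ℝ) ≤ c * L ^ n := by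
      rw [div_le_iff₀ hc0] at h3
      linarith [h3]
    have : (t : ℝ) ≤ (m : ℝ) := le_trans h4 hm1
    exact_mod_cast this
  have hm0 : 0 < m := by omega
  have hmnn : (0 : ℝ) ≤ (m : ℝ) := by positivity
  -- real counting inequality
  have e1 : ((a : ℝ) ^ n) ^ m = ((a : ℝ) ^ n) ^ (m - 1) * (a : ℝ) ^ n := by
    rw [← pow_succ]
    congr 1
    omega
  have e2 : ((a : ℝ) ^ n) ^ m = ((a : ℝ) ^ n) ^ (m - t) * (((a : ℝ) ^ n) ^ t) := by
    rw [← pow_add]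
    congr 1
    omega
  have hpowpos : (0 : ℝ) < ((a : ℝ) ^ n) ^ (m - 1) := by positivity
  have term1 : (m : ℝ) ^ 2 * ((a : ℝ) ^ n) ^ (m - 1) ≤ (2 / 3 : ℝ) ^ n * ((a : ℝ) ^ n) ^ m := by
    have hmsq : (m : ℝ) ^ 2 ≤ (4 / 3 : ℝ) ^ n := by
      calc (m : ℝ) ^ 2 ≤ (L ^ n) ^ 2 := pow_le_pow_left₀ hmnn hmL 2
        _ = (L ^ 2) ^ n := pow_right_comm L n 2
        _ ≤ (4 / 3 : ℝ) ^ n := pow_le_pow_left₀ (by positivity) hL2 n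
    calc (m : ℝ) ^ 2 * ((a : ℝ) ^ n) ^ (m - 1)
        ≤ (4 / 3 : ℝ) ^ n * ((a : ℝ) ^ n) ^ (m - 1) :=
          mul_le_mul_of_nonneg_right hmsq hpowpos.le
      _ ≤ ((2 / 3 : ℝ) * (a : ℝ)) ^ n * ((a : ℝ) ^ n) ^ (m - 1) := by
          apply mul_le_mul_of_nonneg_right _ hpowpos.le
          apply pow_le_pow_left₀ (by norm_num)
          linarith
      _ = (2 / 3 : ℝ) ^ n * ((a : ℝ) ^ n) ^ m := by
          rw [e1, mul_pow]; ring
  have term2 : (m : ℝ) ^ t * (a : ℝ) ^ t * (((a : ℝ) ^ t - 1) ^ n * ((a : ℝ) ^ n) ^ (m - t))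
      ≤ δ * ((a : ℝ) ^ n) ^ m := by
    have hmt : (m : ℝ) ^ t ≤ c2 ^ t * (L ^ n) ^ t := by
      rw [← mul_pow]
      exact pow_le_pow_left₀ hmnn hm3 t
    have hLB : L ^ t * ((a : ℝ) ^ t - 1) = (a : ℝ) ^ t := by
      rw [hLt, div_mul_cancel₀ _ hB.ne']
    have key : (L ^ n) ^ t * ((a : ℝ) ^ t - 1) ^ n = ((a : ℝ) ^ n) ^ t := by
      rw [pow_right_comm L n t, ← mul_pow, hLB, pow_right_comm]
    have hpos2 : (0 : ℝ) ≤ (((a : ℝ) ^ t - 1) ^ n * ((a : ℝ) ^ n) ^ (m - t)) := by positivity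
    calc (m : ℝ) ^ t * (a : ℝ) ^ t * (((a : ℝ) ^ t - 1) ^ n * ((a : ℝ) ^ n) ^ (m - t))
        ≤ c2 ^ t * (L ^ n) ^ t * (a : ℝ) ^ t * (((a : ℝ) ^ t - 1) ^ n * ((a : ℝ) ^ n) ^ (m - t)) := by
          apply mul_le_mul_of_nonneg_right _ hpos2
          exact mul_le_mul_of_nonneg_right hmt (by positivity)
      _ = (c2 ^ t * (a : ℝ) ^ t) * ((L ^ n) ^ t * ((a : ℝ) ^ t - 1) ^ n) * ((a : ℝ) ^ n) ^ (m - t) := by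
          ring
      _ = δ * ((a : ℝ) ^ n) ^ m := by
          rw [hc2Aδ, key, e2]; ring
  have hpowm : (0 : ℝ) < ((a : ℝ) ^ n) ^ m := by positivity
  have keyR : (m : ℝ) ^ 2 * ((a : ℝ) ^ n) ^ (m - 1) +
      (m : ℝ) ^ t * (a : ℝ) ^ t * (((a : ℝ) ^ t - 1) ^ n * ((a : ℝ) ^ n) ^ (m - t))
      < ((a : ℝ) ^ n) ^ m := by
    have hlt : ((2 / 3 : ℝ) ^ n + δ) * ((a : ℝ) ^ n) ^ m < 1 * ((a : ℝ) ^ n) ^ m := by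
      apply mul_lt_mul_of_pos_right _ hpowm
      linarith
    have hexp : ((2 / 3 : ℝ) ^ n + δ) * ((a : ℝ) ^ n) ^ m
        = (2 / 3 : ℝ) ^ n * ((a : ℝ) ^ n) ^ m + δ * ((a : ℝ) ^ n) ^ m := by ring
    rw [hexp, one_mul] at hlt
    linarith [term1, term2]
  have hat1 : (1 : ℕ) ≤ a ^ t := Nat.one_le_pow _ _ (by omega)
  have hcount : m ^ 2 * (a ^ n) ^ (m - 1) +
      m ^ t * a ^ t * ((a ^ t - 1) ^ n * (a ^ n) ^ (m - t)) < (a ^ n) ^ m := by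
    rw [← Nat.cast_lt (α := ℝ)]
    push_cast [Nat.cast_sub hat1]
    convert keyR using 2
  obtain ⟨x, hxinj, hxgood⟩ := exists_good_tuple a t n m (by omega) hcount
  refine ⟨Finset.image x univ, ⟨?_, ?_⟩, ?_⟩
  · rw [Finset.card_image_of_injective _ hxinj, card_univ, Fintype.card_fin]
    exact htm
  · intro v hvinj hvmem α
    have hchoice : ∀ k : Fin t, ∃ i : Fin m, x i = v k := by
      intro k
      obtain ⟨i, _, hi⟩ := Finset.mem_image.1 (hvmem k)
      exact ⟨i, hi⟩
    choose idx hidx using hchoice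
    have hidxinj : Function.Injective idx := by
      intro k k' hkk'
      apply hvinj
      rw [← hidx k, ← hidx k', hkk']
    obtain ⟨r, hr⟩ := hxgood idx hidxinj α
    exact ⟨r, fun k => by rw [← hidx k]; exact hr k⟩
  · rw [Finset.card_image_of_injective _ hxinj, card_univ, Fintype.card_fin, hLamL]
    exact hm1
end

section
/- Let a ≥ 2 and n ≥ a² be integers. Every 2-wise perfect subset V of (Fin n → Fin a) has cardinality at most C(n−1, ⌊n/a⌋ − 1). -/
open Finset in
open scoped FinsetFamily in

lemma choose_mono_left_of_le_half {n r s : ℕ} (hrs : r ≤ s) (hs : s ≤ n / 2) :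
    n.choose r ≤ n.choose s := by
  induction hrs using Nat.decreasingInduction with
  | self => exact le_refl _
  | of_succ k hk ih =>
      exact (Nat.choose_le_succ_of_lt_half_left (lt_of_lt_of_le hk hs)).trans ih


open Finset in
open scoped FinsetFamily in
theorem pairwise_perfect_upper (a n : ℕ) (ha : 2 ≤ a) (hn : a ^ 2 ≤ n)
    (V : Finset (Fin n → Fin a)) (hV : TwisePerfect a 2 n V) :
    V.card ≤ Nat.choose (n - 1) (n / a - 1) := by
  classical
  obtain ⟨hcard, hperf⟩ := hV
  have ha0 : 0 < a := by omega
  set m := n / a with hm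
  have hma : a ≤ m := (Nat.le_div_iff_mul_le ha0).2 (by rwa [pow_two] at hn)
  have hm2 : 2 ≤ m := le_trans ha hma
  have hmn2 : m ≤ n / 2 := Nat.div_le_div_left ha two_pos
  have hmn : m ≤ n := le_trans hmn2 (Nat.div_le_self n 2)
  -- pattern realization for pairs
  have hpat : ∀ u ∈ V, ∀ v ∈ V, u ≠ v → ∀ x y : Fin a, ∃ r, u r = x ∧ v r = y := by
    intro u hu v hv huv x y
    have hinj : Function.Injective ![u, v] := by
      intro i j hij
      fin_cases i <;> fin_cases j <;>
        first
          | rfl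
          | (exfalso; apply huv; simpa using hij)
          | (exfalso; apply huv; simpa using hij.symm)
    obtain ⟨r, hr⟩ := hperf ![u, v] hinj (by intro j; fin_cases j <;> simpa) ![x, y]
    exact ⟨r, by simpa using hr 0, by simpa using hr 1⟩
  -- minimal fibers
  have hmin : ∀ v : Fin n → Fin a, ∃ x : Fin a, #(univ.filter fun r => v r = x) ≤ m := by
    intro v
    by_contra hcon
    push_neg at hcon
    have hsum : ∑ x : Fin a, #(univ.filter fun r => v r = x) = n := by
      rw [← Finset.card_eq_sum_card_fiberwise (fun r (_ : r ∈ univ) => Finset.mem_univ (v r))]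
      simp
    have h1 : a * (m + 1) ≤ n := by
      calc a * (m + 1) = ∑ _x : Fin a, (m + 1) := by
            simp [Finset.sum_const, Finset.card_univ, mul_comm]
        _ ≤ ∑ x : Fin a, #(univ.filter fun r => v r = x) :=
            Finset.sum_le_sum fun x _ => hcon x
        _ = n := hsum
    have h3 : n < a * (m + 1) := by
      have hdm := Nat.div_add_mod n a
      have hlt : n % a < a := Nat.mod_lt n ha0
      calc n = a * (n / a) + n % a := (Nat.div_add_mod n a).symm
        _ < a * (n / a) + a := by omega
        _ = a * (m + 1) := by rw [hm]; ring
    exact absurd h1 (Nat.not_le.2 h3)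
  choose ξ hξ using hmin
  set S : (Fin n → Fin a) → Finset (Fin n) := fun v => univ.filter fun r => v r = ξ v with hS
  have hcardS : ∀ v, #(S v) ≤ m := fun v => hξ v
  have hSne : ∀ v ∈ V, (S v).Nonempty := by
    intro v hv
    obtain ⟨u, hu, huv⟩ := Finset.exists_mem_ne (s := V) (by omega) v
    obtain ⟨r, hr1, hr2⟩ := hpat v hv u hu (fun h => huv h.symm) (ξ v) (ξ u)
    exact ⟨r, by simp [hS, hr1]⟩
  have hnotsub : ∀ u ∈ V, ∀ v ∈ V, u ≠ v → ¬ S u ⊆ S v := by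
    intro u hu v hv huv hsub
    obtain ⟨y, hy⟩ : ∃ y : Fin a, y ≠ ξ v := by
      refine ⟨if ξ v = ⟨0, ha0⟩ then ⟨1, by omega⟩ else ⟨0, ha0⟩, ?_⟩
      split_ifs with h
      · rw [h]; exact Fin.ne_of_val_ne (by simp)
      · exact fun hcon => h hcon.symm
    obtain ⟨r, hr1, hr2⟩ := hpat u hu v hv huv (ξ u) y
    have hru : r ∈ S u := by simp [hS, hr1]
    have hrv := hsub hru
    simp only [hS, Finset.mem_filter] at hrv
    exact hy (hr2 ▸ hrv.2)
  have hSinj : Set.InjOn S V := by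
    intro u hu v hv h
    by_contra huv
    exact hnotsub u hu v hv huv (h ▸ subset_rfl)
  have hnd : ∀ u ∈ V, ∀ v ∈ V, ¬ Disjoint (S u) (S v) := by
    intro u hu v hv
    rcases eq_or_ne u v with rfl | huv
    · obtain ⟨r, hr⟩ := hSne u hu
      exact Finset.not_disjoint_iff.2 ⟨r, hr, hr⟩
    · obtain ⟨r, h1, h2⟩ := hpat u hu v hv huv (ξ u) (ξ v)
      exact Finset.not_disjoint_iff.2 ⟨r, by simp [hS, h1], by simp [hS, h2]⟩
  set F := V.image S with hF
  have hFcard : #F = #V := Finset.card_image_of_injOn hSinj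
  have hmemF : ∀ A ∈ F, ∃ v ∈ V, S v = A := by
    intro A hA; simpa [hF] using hA
  set F' := (Finset.powersetCard m (univ : Finset (Fin n))).filter
      (fun T => ∃ A ∈ F, A ⊆ T) with hF'
  have hF'sized : (F' : Set (Finset (Fin n))).Sized m := by
    intro T hT
    exact (Finset.mem_powersetCard.1 (Finset.mem_filter.1 hT).1).2
  have hF'int : (F' : Set (Finset (Fin n))).Intersecting := by
    intro T hT T' hT'
    simp only [hF', Finset.coe_filter, Set.mem_setOf_eq] at hT hT'
    obtain ⟨A, hA, hAT⟩ := hT.2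
    obtain ⟨A', hA', hAT'⟩ := hT'.2
    obtain ⟨u, hu, rfl⟩ := hmemF A hA
    obtain ⟨v, hv, rfl⟩ := hmemF A' hA'
    exact fun hd => hnd u hu v hv (hd.mono hAT hAT')
  -- complements
  set 𝒜 := Fᶜˢ with h𝒜
  have h𝒜card : #𝒜 = #F := Finset.card_compls F
  have hmem𝒜 : ∀ B ∈ 𝒜, Bᶜ ∈ F := by
    intro B hB; rwa [h𝒜, Finset.mem_compls] at hB
  have h𝒜anti : IsAntichain (· ⊆ ·) (𝒜 : Set (Finset (Fin n))) := by
    intro B hB B' hB' hne hsub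
    obtain ⟨u, hu, hSu⟩ := hmemF Bᶜ (hmem𝒜 B hB)
    obtain ⟨v, hv, hSv⟩ := hmemF B'ᶜ (hmem𝒜 B' hB')
    have huv : v ≠ u := by
      rintro rfl
      exact hne (compl_injective (hSu.symm.trans hSv))
    exact hnotsub v hv u hu huv (by rw [hSv, hSu]; exact Finset.compl_subset_compl.2 hsub)
  have hBcards : ∀ B ∈ 𝒜, #B ≤ n ∧ n - m ≤ #B := by
    intro B hB
    have h1 : #B ≤ n := by simpa using Finset.card_le_univ B
    have h2 : #Bᶜ ≤ m := by
      obtain ⟨v, _, hSv⟩ := hmemF Bᶜ (hmem𝒜 B hB)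
      rw [← hSv]; exact hcardS v
    rw [Finset.card_compl, Fintype.card_fin] at h2
    exact ⟨h1, by omega⟩
  -- sum of slice cards
  have hsum𝒜 : #𝒜 = ∑ r ∈ Finset.range (m + 1), #(𝒜 # (n - r)) := by
    rw [Finset.card_eq_sum_card_fiberwise (f := fun B => n - #B)
      (t := Finset.range (m + 1)) (fun B hB => by
        have := hBcards B hB; simp only [Finset.coe_range, Set.mem_Iio, Finset.mem_range]; omega)]
    refine Finset.sum_congr rfl fun r hr => ?_
    congr 1
    ext B
    simp only [Finset.mem_filter, Finset.mem_slice]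
    constructor
    · rintro ⟨hB, h⟩
      have := hBcards B hB
      exact ⟨hB, by omega⟩
    · rintro ⟨hB, h⟩
      have := hBcards B hB
      simp only [Finset.mem_range] at hr
      exact ⟨hB, by omega⟩
  have hchoosepos : ∀ k ≤ n, (0 : ℚ) < n.choose k := by
    intro k hk; exact_mod_cast Nat.choose_pos hk
  have hQ := Finset.le_card_falling_div_choose (𝕜 := ℚ) (k := m)
      (by simpa using hmn) h𝒜anti
  simp only [Fintype.card_fin] at hQ
  have hLHS : (#𝒜 : ℚ) / n.choose (n - m) ≤
      ∑ r ∈ Finset.range (m + 1), (#(𝒜 # (n - r)) : ℚ) / n.choose (n - r) := by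
    rw [hsum𝒜]
    push_cast
    rw [Finset.sum_div]
    refine Finset.sum_le_sum fun r hr => ?_
    simp only [Finset.mem_range] at hr
    have hrm : r ≤ m := by omega
    have hcc : (n.choose (n - r) : ℚ) ≤ n.choose (n - m) := by
      have e1 : n.choose (n - r) = n.choose r := Nat.choose_symm (hrm.trans hmn)
      have e2 : n.choose (n - m) = n.choose m := Nat.choose_symm hmn
      rw [e1, e2]
      exact_mod_cast choose_mono_left_of_le_half hrm hmn2
    have hpos : (0 : ℚ) < n.choose (n - r) := hchoosepos _ (Nat.sub_le _ _)
    gcongr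
  have hAfall : #𝒜 ≤ #(Finset.falling (n - m) 𝒜) := by
    have h := hLHS.trans hQ
    have hpos : (0 : ℚ) < n.choose (n - m) := hchoosepos _ (Nat.sub_le _ _)
    rw [div_le_div_iff_of_pos_right hpos] at h
    exact_mod_cast h
  have hfallF' : #(Finset.falling (n - m) 𝒜) ≤ #F' := by
    refine Finset.card_le_card_of_injOn (fun B => Bᶜ) ?_ ?_
    · intro B hB
      rw [Finset.mem_coe, Finset.mem_falling] at hB
      obtain ⟨⟨C, hC, hBC⟩, hBcard⟩ := hB
      have hCF : Cᶜ ∈ F := hmem𝒜 C hC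
      simp only [Finset.mem_coe, hF', Finset.mem_filter, Finset.mem_powersetCard]
      refine ⟨⟨Finset.subset_univ _, ?_⟩, Cᶜ, hCF, ?_⟩
      · rw [Finset.card_compl, Fintype.card_fin, hBcard]; omega
      · exact Finset.compl_subset_compl.2 hBC
    · intro B _ B' _ h
      exact compl_injective h
  have hEKR : #F' ≤ (n - 1).choose (m - 1) :=
    Finset.erdos_ko_rado hF'int hF'sized hmn2
  calc #V = #F := hFcard.symm
    _ = #𝒜 := h𝒜card.symm
    _ ≤ #(Finset.falling (n - m) 𝒜) := hAfall
    _ ≤ #F' := hfallF'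
    _ ≤ (n - 1).choose (m - 1) := hEKR
end

section
/- Let a ≥ 2 and n ≥ 1 be integers. Every 2-wise perfect subset V of (Fin n → Fin a) satisfies |V| · a · (a − 1) ≤ C(n, ⌈n/a⌉). -/
lemma exists_two_ne {a : ℕ} (ha : 3 ≤ a) (β : Fin a) :
    ∃ d1 d2 : Fin a, d1 ≠ d2 ∧ d1 ≠ β ∧ d2 ≠ β := by
  by_cases h0 : β.1 = 0
  · refine ⟨⟨1, by omega⟩, ⟨2, by omega⟩, ?_, ?_, ?_⟩ <;>
      (simp only [ne_eq, Fin.ext_iff]; omega)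
  · by_cases h1 : β.1 = 1
    · refine ⟨⟨0, by omega⟩, ⟨2, by omega⟩, ?_, ?_, ?_⟩ <;>
        (simp only [ne_eq, Fin.ext_iff]; omega)
    · refine ⟨⟨0, by omega⟩, ⟨1, by omega⟩, ?_, ?_, ?_⟩ <;>
        (simp only [ne_eq, Fin.ext_iff]; omega)



lemma choose_mono_below_half {n : ℕ} : ∀ {i j : ℕ}, i ≤ j → 2 * j ≤ n →
    Nat.choose n i ≤ Nat.choose n j := by
  intro i j
  induction j with
  | zero => intro hij _; simp [Nat.le_zero.mp hij]
  | succ j ih =>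
    intro hij hj
    rcases Nat.lt_or_ge i (j+1) with h | h
    · exact (ih (by omega) (by omega)).trans
        (Nat.choose_le_succ_of_lt_half_left (by omega))
    · have : i = j + 1 := by omega
      rw [this]

lemma key_ineq {b μ r : ℕ} (hb : 2 ≤ b) (hμ : b + 1 ≤ μ) (hr : 1 ≤ r) :
    (b + 1) * b * (μ + 1) ≤ (b * μ + r) * (b * μ + r) := by
  have h1 : b * μ + 1 ≤ b * μ + r := by omega
  have h2 : (b * μ + 1) * (b * μ + 1) ≤ (b * μ + r) * (b * μ + r) :=
    Nat.mul_le_mul h1 h1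
  refine le_trans ?_ h2
  have h3 : b * (b + 1) ≤ b * μ := Nat.mul_le_mul_left _ hμ
  nlinarith [Nat.mul_le_mul h3 h3, Nat.one_le_iff_ne_zero.mpr (by omega : μ ≠ 0)]

lemma arith_main {a n m : ℕ} (ha : 3 ≤ a) (hn : a * a ≤ n) (hm : 1 ≤ m)
    (ham : a * m ≤ n) :
    a * (a - 1) * (Nat.factorial ((n + a - 1) / a) * Nat.factorial (n - (n + a - 1) / a))
      ≤ Nat.factorial m * ((n - m) * Nat.factorial (n - m)) := by
  obtain ⟨b, rfl⟩ : ∃ b, a = b + 1 := ⟨a - 1, by omega⟩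
  have hb : 2 ≤ b := by omega
  have ha0 : 0 < b + 1 := by omega
  have hsub : b + 1 - 1 = b := by omega
  rw [hsub]
  set a := b + 1 with hadef
  set k := (n + a - 1) / a with hkdef
  set μ := n / a with hμdef
  have hmμ : m ≤ μ := (Nat.le_div_iff_mul_le ha0).mpr (by rw [Nat.mul_comm]; exact ham)
  have hμa : a ≤ μ := (Nat.le_div_iff_mul_le ha0).mpr (by rw [Nat.mul_comm]; exact hn)
  have hμn : μ * a ≤ n := Nat.div_mul_le_self n a
  have hμlen : μ ≤ n := Nat.div_le_self n a
  have h2μ : 2 * μ ≤ n := by nlinarith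
  have hkn : k ≤ n := by
    have h1 : (n + a - 1) / a < n + 1 := by
      rw [Nat.div_lt_iff_lt_mul ha0]
      have h2 : n + a - 1 < n + a := by omega
      have h3 : n + a ≤ (n + 1) * a := by nlinarith
      omega
    omega
  have hmn : m ≤ n := by nlinarith
  -- choose level inequality
  have hC : a * b * Nat.choose n m ≤ (n - m) * Nat.choose n k := by
    have hmono : Nat.choose n m ≤ Nat.choose n μ := choose_mono_below_half hmμ h2μ
    by_cases hd : a ∣ n
    · have hkμ : k = μ := by
        obtain ⟨q, rfl⟩ := hd
        have h1 : a * q + a - 1 = a * q + (a - 1) := Nat.add_sub_assoc (by omega) _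
        rw [hkdef, hμdef, h1, Nat.mul_add_div ha0, Nat.div_eq_of_lt (by omega),
          Nat.mul_div_cancel_left _ ha0, Nat.add_zero]
      rw [hkμ]
      have hle : a * b + m ≤ n := by nlinarith
      have hle' : a * b ≤ n - m := by omega
      exact Nat.mul_le_mul hle' hmono
    · have hr1 : 1 ≤ n % a := by
        rcases Nat.eq_zero_or_pos (n % a) with h | h
        · exact absurd (Nat.dvd_of_mod_eq_zero h) hd
        · exact h
      have hra : n % a < a := Nat.mod_lt _ ha0
      have hdm : a * μ + n % a = n := Nat.div_add_mod n a
      have hkμ : k = μ + 1 := by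
        have h1 : n + a - 1 = a * μ + (n % a - 1 + a) := by omega
        have h2 : (n % a - 1 + a) / a = 1 := by
          rw [Nat.add_div_right _ ha0, Nat.div_eq_of_lt (by omega)]
        rw [hkdef, h1, Nat.mul_add_div ha0, h2]
      have hn1 : a * a + 1 ≤ n := by
        rcases Nat.lt_or_ge (a * a) n with h | h
        · omega
        · have he : n = a * a := le_antisymm h hn
          exact absurd (he ▸ Dvd.intro a rfl) hd
      have hexp : a * μ = b * μ + μ := by rw [hadef]; ring
      have hsval : n - μ = b * μ + n % a := by omega
      have key : a * b * (μ + 1) ≤ (n - μ) * (n - μ) := by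
        rw [hsval, hadef]
        exact key_ineq hb hμa hr1
      have hCμ : Nat.choose n (μ + 1) * (μ + 1) = Nat.choose n μ * (n - μ) :=
        Nat.choose_succ_right_eq n μ
      rw [hkμ]
      have hfin : a * b * Nat.choose n m * (μ + 1) ≤ (n - m) * Nat.choose n (μ + 1) * (μ + 1) := by
        have hnm : n - μ ≤ n - m := by omega
        calc a * b * Nat.choose n m * (μ + 1)
            ≤ a * b * Nat.choose n μ * (μ + 1) :=
              Nat.mul_le_mul_right _ (Nat.mul_le_mul_left _ hmono)
          _ = (a * b * (μ + 1)) * Nat.choose n μ := by ring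
          _ ≤ ((n - μ) * (n - μ)) * Nat.choose n μ := Nat.mul_le_mul_right _ key
          _ ≤ ((n - m) * (n - μ)) * Nat.choose n μ :=
              Nat.mul_le_mul_right _ (Nat.mul_le_mul_right _ hnm)
          _ = (n - m) * (Nat.choose n μ * (n - μ)) := by ring
          _ = (n - m) * (Nat.choose n (μ + 1) * (μ + 1)) := by rw [hCμ]
          _ = (n - m) * Nat.choose n (μ + 1) * (μ + 1) := by ring
      exact Nat.le_of_mul_le_mul_right hfin (by omega)
  -- convert to factorial form
  have e1 : Nat.choose n m * Nat.factorial m * Nat.factorial (n - m) = Nat.factorial n :=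
    Nat.choose_mul_factorial_mul_factorial hmn
  have e2 : Nat.choose n k * Nat.factorial k * Nat.factorial (n - k) = Nat.factorial n :=
    Nat.choose_mul_factorial_mul_factorial hkn
  have h3 : (a * b * (Nat.factorial k * Nat.factorial (n - k))) * Nat.factorial n
      ≤ (Nat.factorial m * ((n - m) * Nat.factorial (n - m))) * Nat.factorial n := by
    calc (a * b * (Nat.factorial k * Nat.factorial (n - k))) * Nat.factorial n
        = (a * b * Nat.choose n m) *
            (Nat.factorial k * (Nat.factorial (n - k) * (Nat.factorial m * Nat.factorial (n - m)))) := by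
          rw [← e1]; ring
      _ ≤ ((n - m) * Nat.choose n k) *
            (Nat.factorial k * (Nat.factorial (n - k) * (Nat.factorial m * Nat.factorial (n - m)))) :=
          Nat.mul_le_mul_right _ hC
      _ = (Nat.factorial m * ((n - m) * Nat.factorial (n - m))) * Nat.factorial n := by
          rw [← e2]; ring
  exact Nat.le_of_mul_le_mul_right h3 (Nat.factorial_pos n)


def blockPerm {n m : ℕ} (h : m + (n - m) = n) (π : Equiv.Perm (Fin m))
    (κ : Equiv.Perm (Fin (n - m))) : Equiv.Perm (Fin n) :=
  (finCongr h.symm).trans (finSumFinEquiv.symm.trans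
    ((Equiv.sumCongr π κ).trans (finSumFinEquiv.trans (finCongr h))))

lemma blockPerm_lt {n m : ℕ} (h : m + (n - m) = n) (π : Equiv.Perm (Fin m))
    (κ : Equiv.Perm (Fin (n - m))) (i : Fin n) (hi : i.1 < m) :
    blockPerm h π κ i = ⟨(π ⟨i.1, hi⟩).1, lt_of_lt_of_le (π ⟨i.1, hi⟩).isLt (by omega)⟩ := by
  have h1 : finCongr h.symm i = Fin.castAdd (n - m) ⟨i.1, hi⟩ := by
    apply Fin.ext; simp
  simp only [blockPerm, Equiv.trans_apply, h1, finSumFinEquiv_symm_apply_castAdd,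
    Equiv.sumCongr_apply, Sum.map_inl, finSumFinEquiv_apply_left]
  apply Fin.ext; simp

lemma blockPerm_ge {n m : ℕ} (h : m + (n - m) = n) (π : Equiv.Perm (Fin m))
    (κ : Equiv.Perm (Fin (n - m))) (j : Fin (n - m)) (hj : m + j.1 < n) :
    blockPerm h π κ ⟨m + j.1, hj⟩ = ⟨m + (κ j).1, by have := (κ j).isLt; omega⟩ := by
  have h1 : finCongr h.symm ⟨m + j.1, hj⟩ = Fin.natAdd m j := by
    apply Fin.ext; simp [Fin.natAdd]
  simp only [blockPerm, Equiv.trans_apply, h1, finSumFinEquiv_symm_apply_natAdd,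
    Equiv.sumCongr_apply, Sum.map_inr, finSumFinEquiv_apply_right]
  apply Fin.ext; simp [Fin.natAdd]

lemma perm_eq_of_agree_off_point {m : ℕ} (π π' : Equiv.Perm (Fin m)) (i0 : Fin m)
    (h : ∀ i, i ≠ i0 → π i = π' i) : π = π' := by
  have key : π i0 = π' i0 := by
    by_contra hne
    have ht : π (π.symm (π' i0)) = π' i0 := π.apply_symm_apply _
    have hti : π.symm (π' i0) ≠ i0 := by
      intro he
      rw [he] at ht
      exact hne ht
    have h2 := h _ hti
    rw [h2] at ht
    exact hti (π'.injective ht)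
  refine Equiv.ext fun i => ?_
  by_cases hi : i = i0
  · rw [hi, key]
  · exact h i hi

set_option maxHeartbeats 1000000 in
lemma event_count {n : ℕ} (B : Finset (Fin n)) (m : ℕ) (hB : B.card = m)
    (h1 : 1 ≤ m) (hmn : m < n) :
    ∃ T : Finset (Equiv.Perm (Fin n)),
      (∀ σ ∈ T, ∀ i : Fin n, i.1 < m - 1 → σ i ∈ B) ∧
      Nat.factorial m * ((n - m) * Nat.factorial (n - m)) ≤ T.card := by
  classical
  have hsum : m + (n - m) = n := by omega
  have hmn' : m ≤ n := le_of_lt hmn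
  have hm1n : m - 1 < n := by omega
  have hmlt : m - 1 < m := by omega
  -- the permutation sending the initial block onto B
  have hBc : Bᶜ.card = n - m := by
    rw [Finset.card_compl, hB]; simp
  let eB := B.orderIsoOfFin hB
  let eC := Bᶜ.orderIsoOfFin hBc
  let e2 : {x // x ∈ Bᶜ} ≃ {x : Fin n // ¬ x ∈ B} :=
    Equiv.subtypeEquivRight (fun x => by simp)
  let σB : Equiv.Perm (Fin n) :=
    (finCongr hsum.symm).trans (finSumFinEquiv.symm.trans
      ((Equiv.sumCongr eB.toEquiv (eC.toEquiv.trans e2)).trans (Equiv.sumCompl (· ∈ B))))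
  have hσB_lt : ∀ i : Fin n, i.1 < m → σB i ∈ B := by
    intro i hi
    have h1' : finCongr hsum.symm i = Fin.castAdd (n - m) ⟨i.1, hi⟩ := by
      apply Fin.ext; simp
    simp only [σB, Equiv.trans_apply, h1', finSumFinEquiv_symm_apply_castAdd,
      Equiv.sumCongr_apply, Sum.map_inl, Equiv.sumCompl_apply_inl]
    exact (eB ⟨i.1, hi⟩).2
  -- swap endpoints
  let aPt : Equiv.Perm (Fin m) → Fin n :=
    fun π => ⟨(π ⟨m - 1, hmlt⟩).1, lt_of_lt_of_le (π ⟨m - 1, hmlt⟩).isLt hmn'⟩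
  let bPt : Fin (n - m) → Fin n := fun j => ⟨m + j.1, by have := j.isLt; omega⟩
  let Ψ : Equiv.Perm (Fin m) → Fin (n - m) → Equiv.Perm (Fin (n - m)) → Equiv.Perm (Fin n) :=
    fun π j κ => (blockPerm hsum π κ).trans (Equiv.swap (aPt π) (bPt j))
  -- key value computations for Ψ
  have hΨlt : ∀ π j κ (i : Fin n) (hi : i.1 < m - 1),
      (Ψ π j κ i).1 = (π ⟨i.1, lt_trans hi hmlt⟩).1 ∧ (Ψ π j κ i).1 < m := by
    intro π j κ i hi
    have him : i.1 < m := lt_trans hi hmlt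
    have hbp := blockPerm_lt hsum π κ i him
    have hΨ : Ψ π j κ i = Equiv.swap (aPt π) (bPt j) (blockPerm hsum π κ i) := rfl
    rw [hΨ, hbp]
    have hne1 : (⟨(π ⟨i.1, him⟩).1, lt_of_lt_of_le (π ⟨i.1, him⟩).isLt (by omega)⟩ : Fin n)
        ≠ aPt π := by
      intro hcon
      have h2 : π ⟨i.1, him⟩ = π ⟨m - 1, hmlt⟩ := by
        apply Fin.ext; exact congrArg (fun t : Fin n => t.1) hcon
      have h2' : (⟨i.1, him⟩ : Fin m) = ⟨m - 1, hmlt⟩ := π.injective h2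
      have h3 : i.1 = m - 1 := by exact congrArg (fun t : Fin m => t.1) h2'
      omega
    have hne2 : (⟨(π ⟨i.1, him⟩).1, lt_of_lt_of_le (π ⟨i.1, him⟩).isLt (by omega)⟩ : Fin n)
        ≠ bPt j := by
      intro hcon
      have hv : (π ⟨i.1, him⟩).1 = m + j.1 := by exact congrArg (fun t : Fin n => t.1) hcon
      have := (π ⟨i.1, him⟩).isLt
      omega
    rw [Equiv.swap_apply_of_ne_of_ne hne1 hne2]
    exact ⟨rfl, (π ⟨i.1, him⟩).isLt⟩
  have hΨmid : ∀ π j κ, Ψ π j κ ⟨m - 1, hm1n⟩ = bPt j := by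
    intro π j κ
    have hbp := blockPerm_lt hsum π κ ⟨m - 1, hm1n⟩ hmlt
    have hΨ : Ψ π j κ ⟨m - 1, hm1n⟩
        = Equiv.swap (aPt π) (bPt j) (blockPerm hsum π κ ⟨m - 1, hm1n⟩) := rfl
    rw [hΨ, hbp]
    have heq : (⟨(π ⟨(⟨m - 1, hm1n⟩ : Fin n).1, hmlt⟩).1,
        lt_of_lt_of_le (π ⟨(⟨m - 1, hm1n⟩ : Fin n).1, hmlt⟩).isLt (by omega)⟩ : Fin n)
        = aPt π := Fin.ext rfl
    rw [heq, Equiv.swap_apply_left]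
  have hΨge : ∀ π j κ (x : Fin (n - m)) (hx : m + x.1 < n),
      Ψ π j κ ⟨m + x.1, hx⟩ = Equiv.swap (aPt π) (bPt j) ⟨m + (κ x).1, by have := (κ x).isLt; omega⟩ := by
    intro π j κ x hx
    have hΨ : Ψ π j κ ⟨m + x.1, hx⟩
        = Equiv.swap (aPt π) (bPt j) (blockPerm hsum π κ ⟨m + x.1, hx⟩) := rfl
    rw [hΨ, blockPerm_ge hsum π κ x hx]
  -- full map
  let Φ : Equiv.Perm (Fin m) × Fin (n - m) × Equiv.Perm (Fin (n - m)) → Equiv.Perm (Fin n) :=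
    fun p => (Ψ p.1 p.2.1 p.2.2).trans σB
  have hΦmem : ∀ p, ∀ i : Fin n, i.1 < m - 1 → Φ p i ∈ B := by
    intro p i hi
    have h2 : Φ p i = σB (Ψ p.1 p.2.1 p.2.2 i) := rfl
    rw [h2]
    exact hσB_lt _ (hΨlt p.1 p.2.1 p.2.2 i hi).2
  have hΦinj : Function.Injective Φ := by
    rintro ⟨π, j, κ⟩ ⟨π', j', κ'⟩ hEq
    have H : ∀ i : Fin n, Ψ π j κ i = Ψ π' j' κ' i := by
      intro i
      have h2 : σB (Ψ π j κ i) = σB (Ψ π' j' κ' i) := by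
        have := congrFun (congrArg (fun (E : Equiv.Perm (Fin n)) => (E : Fin n → Fin n)) hEq) i
        exact this
      exact σB.injective h2
    have hA : ∀ x : Fin m, x.1 < m - 1 → π x = π' x := by
      intro x hx
      have hxn : x.1 < n := lt_trans x.isLt hmn
      have HH := H ⟨x.1, hxn⟩
      have hv1 := (hΨlt π j κ ⟨x.1, hxn⟩ hx).1
      have hv2 := (hΨlt π' j' κ' ⟨x.1, hxn⟩ hx).1
      have hval : (π ⟨x.1, lt_trans hx hmlt⟩).1 = (π' ⟨x.1, lt_trans hx hmlt⟩).1 := by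
        rw [← hv1, ← hv2, HH]
      have hfin : (⟨x.1, lt_trans hx hmlt⟩ : Fin m) = x := Fin.ext rfl
      rw [hfin] at hval
      exact Fin.ext hval
    have hππ : π = π' := by
      refine perm_eq_of_agree_off_point π π' ⟨m - 1, hmlt⟩ fun x hx => ?_
      refine hA x ?_
      have h3 : x.1 ≠ m - 1 := fun hc => hx (Fin.ext hc)
      have := x.isLt
      omega
    subst hππ
    have hjj : j = j' := by
      have HH := H ⟨m - 1, hm1n⟩
      rw [hΨmid π j κ, hΨmid π j' κ'] at HH
      have hv : m + j.1 = m + j'.1 := by exact congrArg (fun t : Fin n => t.1) HH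
      exact Fin.ext (by omega)
    subst hjj
    have hκκ : κ = κ' := by
      refine Equiv.ext fun x => ?_
      have hxn : m + x.1 < n := by have := x.isLt; omega
      have HH := H ⟨m + x.1, hxn⟩
      rw [hΨge π j κ x hxn, hΨge π j κ' x hxn] at HH
      have h4 := (Equiv.swap (aPt π) (bPt j)).injective HH
      have hv : m + (κ x).1 = m + (κ' x).1 := by exact congrArg (fun t : Fin n => t.1) h4
      exact Fin.ext (by omega)
    subst hκκ
    rfl
  refine ⟨(Finset.univ).image Φ, ?_, ?_⟩
  · intro σ hσ i hi
    obtain ⟨p, _, rfl⟩ := Finset.mem_image.mp hσ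
    exact hΦmem p i hi
  · rw [Finset.card_image_of_injective _ hΦinj, Finset.card_univ]
    simp [Fintype.card_perm]

set_option maxHeartbeats 1000000 in
theorem pairwise_perfect_sharp_upper (a n : ℕ) (ha : 2 ≤ a) (hn : 1 ≤ n)
    (V : Finset (Fin n → Fin a)) (hV : TwisePerfect a 2 n V) :
    V.card * a * (a - 1) ≤ Nat.choose n ((n + a - 1) / a) := by
  classical
  obtain ⟨hcard, hprop⟩ := hV
  -- pair covering property
  have Q : ∀ v ∈ V, ∀ w ∈ V, v ≠ w → ∀ α β : Fin a, ∃ r : Fin n, v r = α ∧ w r = β := by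
    intro v hv w hw hvw α β
    have hinj : Function.Injective ![v, w] := by
      intro x y hxy
      fin_cases x <;> fin_cases y
      · rfl
      · exact absurd (show v = w by simpa using hxy) hvw
      · exact absurd (show w = v by simpa using hxy) (fun h => hvw h.symm)
      · rfl
    obtain ⟨r, hr⟩ := hprop ![v, w] hinj (by
      intro j; fin_cases j <;> simpa) ![α, β]
    refine ⟨r, ?_, ?_⟩
    · simpa using hr 0
    · simpa using hr 1
  -- two distinct elements of V
  obtain ⟨v0, hv0, w0, hw0, hvw0⟩ := Finset.one_lt_card.mp (by omega : 1 < V.card)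
  -- n ≥ a²
  have hn2 : a * a ≤ n := by
    have hinj : Function.Injective
        (fun p : Fin a × Fin a => Classical.choose (Q v0 hv0 w0 hw0 hvw0 p.1 p.2)) := by
      intro p q hpq
      have hp := Classical.choose_spec (Q v0 hv0 w0 hw0 hvw0 p.1 p.2)
      have hq := Classical.choose_spec (Q v0 hv0 w0 hw0 hvw0 q.1 q.2)
      have hpq' : Classical.choose (Q v0 hv0 w0 hw0 hvw0 p.1 p.2)
          = Classical.choose (Q v0 hv0 w0 hw0 hvw0 q.1 q.2) := hpq
      rw [hpq'] at hp
      exact Prod.ext (hp.1.symm.trans hq.1) (hp.2.symm.trans hq.2)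
    calc a * a = Fintype.card (Fin a × Fin a) := by simp
      _ ≤ Fintype.card (Fin n) := Fintype.card_le_of_injective _ hinj
      _ = n := by simp
  -- partner
  have hpartner : ∀ v ∈ V, ∃ w ∈ V, w ≠ v := by
    intro v hv
    by_cases h : v = v0
    · exact ⟨w0, hw0, by rw [h]; exact fun hh => hvw0 hh.symm⟩
    · exact ⟨v0, hv0, fun hh => h hh.symm⟩
  -- every fiber is hit
  have hfib : ∀ v ∈ V, ∀ β : Fin a, ∃ r, v r = β := by
    intro v hv β
    obtain ⟨w, hw, hne⟩ := hpartner v hv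
    obtain ⟨r, h1, _⟩ := Q v hv w hw (fun hh => hne hh.symm) β β
    exact ⟨r, h1⟩
  -- minimum fibers
  have hane : (Finset.univ : Finset (Fin a)).Nonempty :=
    ⟨⟨0, by omega⟩, Finset.mem_univ _⟩
  have hminex : ∀ v : Fin n → Fin a, ∃ β : Fin a, ∀ γ : Fin a,
      (Finset.univ.filter (fun r => v r = β)).card
        ≤ (Finset.univ.filter (fun r => v r = γ)).card := by
    intro v
    obtain ⟨β, _, hβ⟩ := Finset.exists_min_image Finset.univ
      (fun β => (Finset.univ.filter (fun r => v r = β)).card) hane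
    exact ⟨β, fun γ => hβ γ (Finset.mem_univ _)⟩
  set βm : (Fin n → Fin a) → Fin a := fun v => Classical.choose (hminex v) with hβmdef
  set Bv : (Fin n → Fin a) → Finset (Fin n) :=
    fun v => Finset.univ.filter (fun r => v r = βm v) with hBvdef
  set mv : (Fin n → Fin a) → ℕ := fun v => (Bv v).card with hmvdef
  have hfibsum : ∀ v : Fin n → Fin a,
      ∑ β : Fin a, (Finset.univ.filter (fun r => v r = β)).card = n := by
    intro v
    rw [← Finset.card_eq_sum_card_fiberwise (fun x _ => Finset.mem_univ (v x))]
    simp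
  have hmv_min : ∀ v : Fin n → Fin a, a * mv v ≤ n := by
    intro v
    have hle : ∀ β ∈ (Finset.univ : Finset (Fin a)),
        mv v ≤ (Finset.univ.filter (fun r => v r = β)).card :=
      fun β _ => Classical.choose_spec (hminex v) β
    calc a * mv v = ∑ _β : Fin a, mv v := by
          rw [Finset.sum_const, Finset.card_univ, Fintype.card_fin, smul_eq_mul]
      _ ≤ ∑ β : Fin a, (Finset.univ.filter (fun r => v r = β)).card :=
          Finset.sum_le_sum hle
      _ = n := hfibsum v
  have hmv1 : ∀ v ∈ V, 1 ≤ mv v := by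
    intro v hv
    obtain ⟨r, hr⟩ := hfib v hv (βm v)
    exact Nat.one_le_iff_ne_zero.mpr
      (Finset.card_ne_zero_of_mem (a := r) (by simp [hBvdef, hr]))
  rcases eq_or_lt_of_le ha with ha2 | ha3
  · -- a = 2 : Sperner's theorem
    subst ha2
    set F : (Fin n → Fin 2) × Fin 2 → Finset (Fin n) :=
      fun p => Finset.univ.filter (fun r => p.1 r = p.2) with hFdef
    have hother : ∀ γ : Fin 2, ∃ γ' : Fin 2, γ' ≠ γ := by
      intro γ
      refine ⟨if γ = 0 then 1 else 0, ?_⟩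
      split_ifs with h
      · rw [h]; decide
      · exact fun hc => h hc.symm
    have hinjF : Set.InjOn F ↑(V ×ˢ (Finset.univ : Finset (Fin 2))) := by
      rintro ⟨v, β⟩ hv ⟨w, γ⟩ hw hEq
      simp only [Finset.coe_product, Set.mem_prod, Finset.mem_coe] at hv hw
      have hvV : v ∈ V := hv.1
      have hwV : w ∈ V := hw.1
      have hiff : ∀ r : Fin n, v r = β ↔ w r = γ := by
        intro r
        have h1 := Finset.ext_iff.mp hEq r
        simpa [hFdef] using h1
      by_cases hvw : v = w
      · subst hvw
        obtain ⟨r, hr⟩ := hfib v hvV β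
        have : v r = γ := (hiff r).mp hr
        exact Prod.ext rfl (by rw [← hr, this])
      · exfalso
        obtain ⟨γ', hγ'⟩ := hother γ
        obtain ⟨r, hr1, hr2⟩ := Q v hvV w hwV hvw β γ'
        exact hγ' (hr2.symm.trans ((hiff r).mp hr1))
    have hanti : IsAntichain (· ⊆ ·)
        (↑((V ×ˢ (Finset.univ : Finset (Fin 2))).image F) : Set (Finset (Fin n))) := by
      rintro A hA B hB hAB hsub
      obtain ⟨⟨v, β⟩, hvmem, rfl⟩ := Finset.mem_image.mp (Finset.mem_coe.mp hA)
      obtain ⟨⟨w, γ⟩, hwmem, rfl⟩ := Finset.mem_image.mp (Finset.mem_coe.mp hB)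
      simp only [Finset.mem_product] at hvmem hwmem
      have hvV : v ∈ V := hvmem.1
      have hwV : w ∈ V := hwmem.1
      have hsub' : ∀ r : Fin n, v r = β → w r = γ := by
        intro r hr
        have h1 : r ∈ F (v, β) := by simp [hFdef, hr]
        have h2 := hsub h1
        simpa [hFdef] using h2
      by_cases hvw : v = w
      · subst hvw
        by_cases hβγ : β = γ
        · exact hAB (by rw [hβγ])
        · obtain ⟨r, hr⟩ := hfib v hvV β
          exact hβγ ((hr ▸ hsub' r hr : v r = γ) ▸ hr.symm ▸ rfl)
      · obtain ⟨γ', hγ'⟩ := hother γ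
        obtain ⟨r, hr1, hr2⟩ := Q v hvV w hwV hvw β γ'
        exact hγ' (hr2.symm.trans (hsub' r hr1))
    have hcardF : ((V ×ˢ (Finset.univ : Finset (Fin 2))).image F).card = V.card * 2 := by
      rw [Finset.card_image_of_injOn hinjF, Finset.card_product, Finset.card_univ,
        Fintype.card_fin]
    have hsp := IsAntichain.sperner hanti
    rw [hcardF] at hsp
    have hk2 : (n + 2 - 1) / 2 = n - n / 2 := by omega
    rw [hk2, Nat.choose_symm (Nat.div_le_self n 2)]
    calc V.card * 2 * (2 - 1) = V.card * 2 := by ring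
      _ ≤ (Fintype.card (Fin n)).choose (Fintype.card (Fin n) / 2) := hsp
      _ = Nat.choose n (n / 2) := by rw [Fintype.card_fin]
  · -- a ≥ 3 : permutation counting
    set k := (n + a - 1) / a with hkdef
    have hmvlt : ∀ v ∈ V, mv v < n := by
      intro v hv
      have h3 : 3 * mv v ≤ a * mv v := Nat.mul_le_mul_right _ (by omega)
      have := hmv_min v
      have := hmv1 v hv
      omega
    have hpkg : ∀ v : {x // x ∈ V}, ∃ T : Finset (Equiv.Perm (Fin n)),
        (∀ σ ∈ T, ∀ i : Fin n, i.1 < mv v.1 - 1 → σ i ∈ Bv v.1) ∧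
        Nat.factorial (mv v.1) * ((n - mv v.1) * Nat.factorial (n - mv v.1)) ≤ T.card := by
      rintro ⟨v, hv⟩
      exact event_count (Bv v) (mv v) rfl (hmv1 v hv) (hmvlt v hv)
    choose T hT using hpkg
    -- disjointness of the events
    have hkey0 : ∀ v ∈ V, ∀ w ∈ V, v ≠ w → mv v ≤ mv w →
        ∀ σ : Equiv.Perm (Fin n), (∀ i : Fin n, i.1 < mv v - 1 → σ i ∈ Bv v) →
        (∀ i : Fin n, i.1 < mv w - 1 → σ i ∈ Bv w) → False := by
      intro v hv w hw hvw hmle σ hgv hgw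
      have hm1 : 1 ≤ mv v := hmv1 v hv
      have hmnv : mv v < n := hmvlt v hv
      have hc : mv v - 1 ≤ n := by omega
      set Pre : Finset (Fin n) :=
        (Finset.univ : Finset (Fin (mv v - 1))).image (fun i => σ (Fin.castLE hc i))
        with hPredef
      have hPrecard : Pre.card = mv v - 1 := by
        rw [hPredef, Finset.card_image_of_injective _
          (show Function.Injective (fun i => σ (Fin.castLE hc i)) from
            fun i1 i2 h => Fin.castLE_injective hc (σ.injective h)),
          Finset.card_univ, Fintype.card_fin]
      have hPreB : Pre ⊆ Bv v := by
        intro y hy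
        obtain ⟨i, _, rfl⟩ := Finset.mem_image.mp hy
        exact hgv _ (by simpa using i.isLt)
      have hPreW : Pre ⊆ Bv w := by
        intro y hy
        obtain ⟨i, _, rfl⟩ := Finset.mem_image.mp hy
        refine hgw _ ?_
        have := i.isLt
        simp only [Fin.coe_castLE]
        omega
      have hBvcard : (Bv v).card = mv v := rfl
      have hsd : (Bv v \ Pre).card = 1 := by
        rw [Finset.card_sdiff_of_subset hPreB, hPrecard, hBvcard]
        omega
      obtain ⟨x, hx⟩ := Finset.card_eq_one.mp hsd
      have hcover : ∀ y, y ∈ Bv v → y ∉ Bv w → y = x := by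
        intro y hyB hyW
        have h5 : y ∉ Pre := fun h => hyW (hPreW h)
        have h6 : y ∈ Bv v \ Pre := Finset.mem_sdiff.mpr ⟨hyB, h5⟩
        rw [hx] at h6
        exact Finset.mem_singleton.mp h6
      obtain ⟨d1, d2, h12, h1b, h2b⟩ := exists_two_ne (by omega : 3 ≤ a) (βm w)
      obtain ⟨r1, hr11, hr12⟩ := Q v hv w hw hvw (βm v) d1
      obtain ⟨r2, hr21, hr22⟩ := Q v hv w hw hvw (βm v) d2
      have hr1x : r1 = x := by
        refine hcover r1 (by simp [hBvdef, hr11]) ?_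
        simp only [hBvdef, Finset.mem_filter, Finset.mem_univ, true_and, hr12]
        exact h1b
      have hr2x : r2 = x := by
        refine hcover r2 (by simp [hBvdef, hr21]) ?_
        simp only [hBvdef, Finset.mem_filter, Finset.mem_univ, true_and, hr22]
        exact h2b
      rw [hr1x] at hr12
      rw [hr2x] at hr22
      exact h12 (hr12.symm.trans hr22)
    have hdisj : ∀ v ∈ V.attach, ∀ w ∈ V.attach, v ≠ w → Disjoint (T v) (T w) := by
      intro v _ w _ hvw
      rw [Finset.disjoint_left]
      intro σ hσv hσw
      have hne : v.1 ≠ w.1 := fun h => hvw (Subtype.ext h)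
      rcases le_total (mv v.1) (mv w.1) with h | h
      · exact hkey0 v.1 v.2 w.1 w.2 hne h σ ((hT v).1 σ hσv) ((hT w).1 σ hσw)
      · exact hkey0 w.1 w.2 v.1 v.2 (fun hh => hne hh.symm) h σ
          ((hT w).1 σ hσw) ((hT v).1 σ hσv)
    have hsum1 : ∑ v ∈ V.attach, (T v).card ≤ Nat.factorial n := by
      rw [← Finset.card_biUnion hdisj]
      calc (V.attach.biUnion T).card ≤ (Finset.univ : Finset (Equiv.Perm (Fin n))).card :=
            Finset.card_le_univ _
        _ = Nat.factorial n := by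
            rw [Finset.card_univ, Fintype.card_perm, Fintype.card_fin]
    have hkn : k ≤ n := by
      have h1 : (n + a - 1) / a < n + 1 := by
        rw [Nat.div_lt_iff_lt_mul (by omega : 0 < a)]
        have h2 : n + a - 1 < n + a := by omega
        have h3 : n + a ≤ (n + 1) * a := by nlinarith
        omega
      omega
    have hper : ∀ v : {x // x ∈ V},
        a * (a - 1) * (Nat.factorial k * Nat.factorial (n - k)) ≤ (T v).card := by
      intro v
      refine le_trans ?_ (hT v).2
      rw [hkdef]
      exact arith_main (by omega) hn2 (hmv1 v.1 v.2) (hmv_min v.1)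
    have htot : V.card * (a * (a - 1) * (Nat.factorial k * Nat.factorial (n - k)))
        ≤ Nat.factorial n := by
      calc V.card * (a * (a - 1) * (Nat.factorial k * Nat.factorial (n - k)))
          = ∑ _v ∈ V.attach, (a * (a - 1) * (Nat.factorial k * Nat.factorial (n - k))) := by
            rw [Finset.sum_const, Finset.card_attach, smul_eq_mul]
        _ ≤ ∑ v ∈ V.attach, (T v).card := Finset.sum_le_sum (fun v _ => hper v)
        _ ≤ Nat.factorial n := hsum1
    have hch : Nat.choose n k * Nat.factorial k * Nat.factorial (n - k) = Nat.factorial n :=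
      Nat.choose_mul_factorial_mul_factorial hkn
    have hX : 0 < Nat.factorial k * Nat.factorial (n - k) :=
      Nat.mul_pos (Nat.factorial_pos _) (Nat.factorial_pos _)
    have htot2 : (V.card * (a * (a - 1))) * (Nat.factorial k * Nat.factorial (n - k))
        ≤ Nat.choose n k * (Nat.factorial k * Nat.factorial (n - k)) := by
      calc (V.card * (a * (a - 1))) * (Nat.factorial k * Nat.factorial (n - k))
          = V.card * (a * (a - 1) * (Nat.factorial k * Nat.factorial (n - k))) := by ring
        _ ≤ Nat.factorial n := htot
        _ = Nat.choose n k * (Nat.factorial k * Nat.factorial (n - k)) := by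
            rw [← hch]; ring
    have hfin := Nat.le_of_mul_le_mul_right htot2 hX
    calc V.card * a * (a - 1) = V.card * (a * (a - 1)) := by ring
      _ ≤ Nat.choose n k := hfin
end

section
/- Let a ≥ 2 be an integer and let n₁, …, n_a be positive integers with n = n₁ + ⋯ + n_a. Then ∑_{i=1}^{a} 1 / C(n, n_i) ≥ a / C(n, ⌈n/a⌉), where the sum is taken in the real numbers. -/
private lemma choose_logconcave (n k : ℕ) (hk : 1 ≤ k) (hkn : k + 1 ≤ n) :
    n.choose (k-1) * n.choose (k+1) ≤ n.choose k * n.choose k := by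
  have h1 : n.choose k * k = n.choose (k-1) * (n - (k-1)) := by
    have h := Nat.choose_succ_right_eq n (k-1)
    rwa [Nat.sub_add_cancel hk] at h
  have h2 : n.choose (k+1) * (k+1) = n.choose k * (n - k) := Nat.choose_succ_right_eq n k
  have hBA : k * (n - k) ≤ (n - (k-1)) * (k+1) := by
    have e1 : n - (k-1) = (n-k)+1 := by omega
    rw [e1, Nat.mul_comm]
    exact Nat.mul_le_mul (Nat.le_succ _) (Nat.le_succ _)
  have hpos : 0 < k * (n - k) := Nat.mul_pos (by omega) (by omega)
  refine Nat.le_of_mul_le_mul_right ?_ hpos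
  calc n.choose (k-1) * n.choose (k+1) * (k * (n-k))
      ≤ n.choose (k-1) * n.choose (k+1) * ((n - (k-1)) * (k+1)) :=
        Nat.mul_le_mul_left _ hBA
    _ = (n.choose (k-1) * (n - (k-1))) * (n.choose (k+1) * (k+1)) := by ring
    _ = (n.choose k * k) * (n.choose k * (n - k)) := by rw [← h1, h2]
    _ = n.choose k * n.choose k * (k * (n-k)) := by ring

private lemma conv_step (n j : ℕ) (hj : j + 2 ≤ n) :
    2 * ((1:ℝ)/(n.choose (j+1))) ≤ 1/(n.choose j) + 1/(n.choose (j+2)) := by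
  have hx : (0:ℝ) < n.choose j := by exact_mod_cast Nat.choose_pos (by omega)
  have hy : (0:ℝ) < n.choose (j+1) := by exact_mod_cast Nat.choose_pos (by omega)
  have hz : (0:ℝ) < n.choose (j+2) := by exact_mod_cast Nat.choose_pos (by omega)
  have hlc : (n.choose j : ℝ) * n.choose (j+2) ≤ (n.choose (j+1):ℝ) * n.choose (j+1) := by
    have := choose_logconcave n (j+1) (by omega) (by omega)
    simp only [Nat.add_sub_cancel] at this
    exact_mod_cast this
  rw [div_add_div _ _ hx.ne' hz.ne', mul_one_div, div_le_div_iff₀ hy (by positivity)]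
  nlinarith [mul_nonneg hy.le (sq_nonneg ((n.choose j : ℝ) - n.choose (j+2))),
    mul_nonneg (by positivity : (0:ℝ) ≤ (n.choose j : ℝ) + n.choose (j+2)) (sub_nonneg.2 hlc),
    hx, hy, hz]

private lemma delta_mono (n : ℕ) : ∀ i j : ℕ, i ≤ j → j + 1 ≤ n →
    (1:ℝ)/(n.choose (i+1)) - 1/(n.choose i) ≤ 1/(n.choose (j+1)) - 1/(n.choose j) := by
  intro i j hij
  induction j, hij using Nat.le_induction with
  | base => intro _; exact le_refl _
  | succ j hij ih =>
    intro hj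
    have h1 := ih (by omega)
    have h2 := conv_step n j (by omega)
    linarith

private lemma support (n c : ℕ) (hc1 : 1 ≤ c) (hcn : c ≤ n) :
    ∀ k, k ≤ n →
    (1:ℝ)/(n.choose c) + ((1:ℝ)/(n.choose c) - 1/(n.choose (c-1))) * ((k:ℝ) - (c:ℝ))
      ≤ 1/(n.choose k) := by
  have hcc : c - 1 + 1 = c := by omega
  have hD : ∀ j, c - 1 ≤ j → j + 1 ≤ n →
      (1:ℝ)/(n.choose c) - 1/(n.choose (c-1)) ≤ 1/(n.choose (j+1)) - 1/(n.choose j) := by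
    intro j h1 h2
    have h := delta_mono n (c-1) j h1 h2
    rwa [hcc] at h
  have hD' : ∀ j, j ≤ c - 1 →
      (1:ℝ)/(n.choose (j+1)) - 1/(n.choose j) ≤ (1:ℝ)/(n.choose c) - 1/(n.choose (c-1)) := by
    intro j h1
    have h := delta_mono n j (c-1) h1 (by omega)
    rwa [hcc] at h
  have hup : ∀ k, c ≤ k → k ≤ n →
      (1:ℝ)/(n.choose c) + ((1:ℝ)/(n.choose c) - 1/(n.choose (c-1))) * ((k:ℝ) - (c:ℝ))
        ≤ 1/(n.choose k) := by
    intro k hck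
    induction k, hck using Nat.le_induction with
    | base => intro _; simp
    | succ k hck ih =>
      intro hk1
      have h1 := ih (by omega)
      have h2 := hD k (by omega) hk1
      push_cast
      push_cast at h1
      nlinarith [h1, h2]
  have hlo : ∀ d, d ≤ c →
      (1:ℝ)/(n.choose c) + ((1:ℝ)/(n.choose c) - 1/(n.choose (c-1))) * (((c-d:ℕ):ℝ) - (c:ℝ))
        ≤ 1/(n.choose (c-d)) := by
    intro d
    induction d with
    | zero => intro _; simp
    | succ d ih =>
      intro hd
      have h1 := ih (by omega)
      have h2 := hD' (c - (d+1)) (by omega)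
      have e1 : c - (d+1) + 1 = c - d := by omega
      rw [e1] at h2
      have e2 : ((c - d : ℕ) : ℝ) = (c:ℝ) - d := by
        have hdc : d ≤ c := by omega
        push_cast [hdc]; ring
      have e3 : ((c - (d+1) : ℕ) : ℝ) = (c:ℝ) - d - 1 := by
        push_cast [hd]; ring
      rw [e2] at h1
      rw [e3]
      nlinarith [h1, h2]
  intro k hk
  rcases le_total c k with h | h
  · exact hup k h hk
  · have h3 := hlo (c - k) (by omega)
    have e : c - (c - k) = k := by omega
    rw [e] at h3
    exact h3

private lemma choose_pred_le (n c : ℕ) (hc1 : 1 ≤ c) (h2c : 2*c ≤ n + 1) :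
    n.choose (c-1) ≤ n.choose c := by
  have h1 : n.choose c * c = n.choose (c-1) * (n - (c-1)) := by
    have h := Nat.choose_succ_right_eq n (c-1)
    rwa [Nat.sub_add_cancel hc1] at h
  have hle : c ≤ n - (c-1) := by omega
  refine Nat.le_of_mul_le_mul_right ?_ (show 0 < c by omega)
  calc n.choose (c-1) * c ≤ n.choose (c-1) * (n - (c-1)) :=
        Nat.mul_le_mul_left _ hle
    _ = n.choose c * c := h1.symm

theorem binomial_reciprocal_sum (a : ℕ) (ha : 2 ≤ a) (m : Fin a → ℕ)
    (hm : ∀ i, 1 ≤ m i) (n : ℕ) (hn : n = ∑ i, m i) :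
    (a : ℝ) / (Nat.choose n ((n + a - 1) / a) : ℝ) ≤
      ∑ i, (1 : ℝ) / (Nat.choose n (m i) : ℝ) := by
  set c := (n + a - 1) / a with hcdef
  have han : a ≤ n := by
    calc a = ∑ _i : Fin a, 1 := by simp
      _ ≤ ∑ i, m i := Finset.sum_le_sum (fun i _ => hm i)
      _ = n := hn.symm
  have hc1 : 1 ≤ c := (Nat.le_div_iff_mul_le (by omega)).2 (by omega)
  -- n ≤ a * c and 2c ≤ n+1
  have hdm := Nat.div_add_mod (n + a - 1) a
  have hmod : (n + a - 1) % a < a := Nat.mod_lt _ (by omega)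
  rw [← hcdef] at hdm
  have hmul : a * c = a * (c - 1) + a := by
    rw [← Nat.mul_succ]
    congr 1
    omega
  have h3 : 2 * (c - 1) ≤ a * (c - 1) := Nat.mul_le_mul_right _ ha
  have hac : n ≤ a * c := by
    generalize a * c = A at hdm ⊢
    omega
  have h2c : 2 * c ≤ n + 1 := by
    generalize hg : a * c = A at hdm hmul
    generalize a * (c - 1) = B at hmul h3
    omega
  have hcn : c ≤ n := by omega
  have hmile : ∀ i, m i ≤ n := by
    intro i
    rw [hn]
    exact Finset.single_le_sum (f := fun j => m j) (fun j _ => Nat.zero_le _) (Finset.mem_univ i)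
  have hxc : (0:ℝ) < n.choose c := by exact_mod_cast Nat.choose_pos hcn
  have hxc' : (0:ℝ) < n.choose (c-1) := by exact_mod_cast Nat.choose_pos (by omega)
  set D := (1:ℝ)/(n.choose c) - 1/(n.choose (c-1)) with hDdef
  have hD0 : D ≤ 0 := by
    have hmono : (n.choose (c-1) : ℝ) ≤ n.choose c := by
      exact_mod_cast choose_pred_le n c hc1 h2c
    have := one_div_le_one_div_of_le hxc' hmono
    rw [hDdef]
    linarith
  have hkey : ∀ i : Fin a, (1:ℝ)/(n.choose c) + D * ((m i : ℝ) - (c:ℝ)) ≤ 1/(n.choose (m i)) :=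
    fun i => support n c hc1 hcn (m i) (hmile i)
  have hsum := Finset.sum_le_sum (fun i (_ : i ∈ Finset.univ) => hkey i)
  have hexp : ∑ i : Fin a, ((1:ℝ)/(n.choose c) + D * ((m i : ℝ) - (c:ℝ)))
      = a * ((1:ℝ)/(n.choose c)) + D * ((n:ℝ) - a * c) := by
    rw [Finset.sum_add_distrib, Finset.sum_const, Finset.card_univ, Fintype.card_fin,
      nsmul_eq_mul, ← Finset.mul_sum, Finset.sum_sub_distrib, Finset.sum_const,
      Finset.card_univ, Fintype.card_fin, nsmul_eq_mul]
    have hcast : ∑ i, ((m i : ℝ)) = (n:ℝ) := by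
      rw [hn]
      push_cast
      ring
    rw [hcast]
  rw [hexp] at hsum
  have hnonneg : 0 ≤ D * ((n:ℝ) - a * c) := by
    have : (n:ℝ) ≤ (a:ℝ) * c := by exact_mod_cast hac
    nlinarith
  calc (a : ℝ) / (n.choose c : ℝ) = a * ((1:ℝ)/(n.choose c)) := by ring
    _ ≤ a * ((1:ℝ)/(n.choose c)) + D * ((n:ℝ) - a * c) := le_add_of_nonneg_right hnonneg
    _ ≤ ∑ i, (1 : ℝ) / (n.choose (m i) : ℝ) := hsum
end

section
/- Let m ≥ 2, n ≥ 2 and b ≥ 1 be integers, and let A₁, …, A_m be m subsets of Fin n such that for all i ≠ j one has |A_i \ A_j| ≥ b and |A_j \ A_i| ≥ b. Then ∑_{i=1}^{m} b / C(n, |A_i|) ≤ 1, where the sum is taken in the real numbers. -/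
open Finset

lemma aux_choose_ge (y : ℕ) : ∀ x : ℕ, x + 1 ≤ (x + y + 1).choose (y + 1) := by
  induction y with
  | zero => intro x; simp
  | succ y ih =>
    intro x
    have h : (x + (y + 1) + 1).choose (y + 1 + 1)
        = (x + y + 1).choose (y + 1) + (x + y + 1).choose (y + 2) := by
      have : x + (y + 1) + 1 = (x + y + 1) + 1 := by ring
      rw [this, Nat.choose_succ_succ]
    rw [h]
    exact le_trans (ih x) (Nat.le_add_right _ _)

lemma aux_b_le_choose (b c : ℕ) (hb : 1 ≤ b) (hc : b ≤ c) :
    b ≤ (c + b - 1).choose (b - 1) := by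
  obtain ⟨b', rfl⟩ : ∃ b', b = b' + 1 := ⟨b - 1, by omega⟩
  have h1 : c + (b' + 1) - 1 = c + b' := by omega
  have h2 : b' + 1 - 1 = b' := by omega
  rw [h1, h2]
  cases b' with
  | zero => simp
  | succ b'' =>
    have h := aux_choose_ge b'' c
    rw [show c + (b'' + 1) = c + b'' + 1 from by omega]
    omega

theorem packing_lemma (m n b : ℕ) (hm : 2 ≤ m) (hn : 2 ≤ n) (hb : 1 ≤ b)
    (A : Fin m → Finset (Fin n))
    (hA : ∀ i j : Fin m, i ≠ j → b ≤ ((A i) \ (A j)).card) :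
    ∑ i, (b : ℝ) / (Nat.choose n (A i).card : ℝ) ≤ 1 := by
  classical
  -- basic size bounds
  have ha : ∀ i : Fin m, b ≤ (A i).card ∧ (A i).card + b ≤ n := by
    intro i
    obtain ⟨j, hj⟩ : ∃ j : Fin m, j ≠ i :=
      Fintype.exists_ne_of_one_lt_card (by simpa using by omega) i
    have h1 : b ≤ (A i \ A j).card := hA i j (Ne.symm hj)
    have h2 : b ≤ (A j \ A i).card := hA j i hj
    have h3 : (A i \ A j).card ≤ (A i).card := card_le_card sdiff_subset
    have h4 : (A j \ A i) ⊆ (A i)ᶜ := by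
      intro x hx
      simp only [mem_sdiff] at hx
      simpa using hx.2
    have h5 : (A j \ A i).card ≤ ((A i)ᶜ).card := card_le_card h4
    have h6 : ((A i)ᶜ).card = n - (A i).card := by
      rw [card_compl]; simp
    have h7 : (A i).card ≤ n := by
      simpa using card_le_card (subset_univ (A i))
    omega
  set k : Fin m → ℕ := fun i => (A i).card + 1 - b with hk
  set D : Fin m → Finset (Finset (Fin n)) := fun i => (A i).powersetCard (k i) with hD
  -- cross lemma
  have cross : ∀ i j : Fin m, i ≠ j → ∀ B B' : Finset (Fin n),
      B ∈ D i → B' ∈ D j → B ⊆ B' → False := by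
    intro i j hij B B' hB hB' hsub
    simp only [hD, mem_powersetCard] at hB hB'
    have hBA : B ⊆ A j := hsub.trans hB'.1
    have h1 : A i \ A j ⊆ A i \ B := sdiff_subset_sdiff (le_refl _) hBA
    have h2 : (A i \ B).card = (A i).card - B.card := card_sdiff_of_subset hB.1
    have h3 := card_le_card h1
    have h4 := hA i j hij
    have h5 := (ha i).1
    rw [h2, hB.2] at h3
    simp only [hk] at h3
    omega
  -- antichain
  set 𝒜 : Finset (Finset (Fin n)) := univ.biUnion D with h𝒜
  have hanti : IsAntichain (· ⊆ ·) (𝒜 : Set (Finset (Fin n))) := by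
    intro B hB B' hB' hne hsub
    simp only [h𝒜, coe_biUnion, coe_univ, Set.mem_iUnion, mem_coe, Set.mem_univ,
      Set.iUnion_true] at hB hB'
    obtain ⟨i, hBi⟩ := hB
    obtain ⟨j, hBj⟩ := hB'
    by_cases hij : i = j
    · subst hij
      simp only [hD, mem_powersetCard] at hBi hBj
      exact hne (eq_of_subset_of_card_le hsub (by rw [hBi.2, hBj.2]))
    · exact cross i j hij B B' hBi hBj hsub
  -- per-index inequality
  have step1 : ∀ i : Fin m,
      (b : ℝ) / (Nat.choose n (A i).card : ℝ) ≤ ((D i).card : ℝ) / (Nat.choose n (k i) : ℝ) := by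
    intro i
    obtain ⟨h1, h2⟩ := ha i
    have hkle : k i ≤ (A i).card := by simp only [hk]; omega
    have han : (A i).card ≤ n := by omega
    have hkn : k i ≤ n := le_trans hkle han
    have hcard : (D i).card = Nat.choose (A i).card (k i) := by
      rw [hD]; exact card_powersetCard _ _
    have hid : Nat.choose n (A i).card * Nat.choose (A i).card (k i)
        = Nat.choose n (k i) * Nat.choose (n - k i) ((A i).card - k i) :=
      Nat.choose_mul hkle
    have hsub1 : (A i).card - k i = b - 1 := by simp only [hk]; omega
    have hsub2 : n - k i = (n - (A i).card) + b - 1 := by simp only [hk]; omega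
    have hble : b ≤ Nat.choose (n - k i) ((A i).card - k i) := by
      rw [hsub1, hsub2]
      exact aux_b_le_choose b (n - (A i).card) hb (by omega)
    have hnat : b * Nat.choose n (k i) ≤ Nat.choose (A i).card (k i) * Nat.choose n (A i).card := by
      calc b * Nat.choose n (k i) ≤ Nat.choose (n - k i) ((A i).card - k i) * Nat.choose n (k i) :=
            Nat.mul_le_mul_right _ hble
        _ = Nat.choose n (A i).card * Nat.choose (A i).card (k i) := by rw [hid]; ring
        _ = Nat.choose (A i).card (k i) * Nat.choose n (A i).card := by ring
    have hp1 : (0 : ℝ) < (Nat.choose n (A i).card : ℝ) := by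
      exact_mod_cast Nat.choose_pos han
    have hp2 : (0 : ℝ) < (Nat.choose n (k i) : ℝ) := by
      exact_mod_cast Nat.choose_pos hkn
    rw [div_le_div_iff₀ hp1 hp2, hcard]
    exact_mod_cast hnat
  have step2 : ∑ i : Fin m, ((D i).card : ℝ) / (Nat.choose n (k i) : ℝ)
      ≤ ∑ r ∈ range (n + 1), ((𝒜 # r).card : ℝ) / (Nat.choose n r : ℝ) := by
    have hmap : ∀ i ∈ (univ : Finset (Fin m)), k i ∈ range (n + 1) := by
      intro i _
      obtain ⟨h1, h2⟩ := ha i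
      simp only [hk, mem_range]; omega
    rw [← Finset.sum_fiberwise_of_maps_to hmap
      (fun i => ((D i).card : ℝ) / (Nat.choose n (k i) : ℝ))]
    apply Finset.sum_le_sum
    intro r _
    have hre : ∀ i ∈ univ.filter (fun i => k i = r),
        ((D i).card : ℝ) / (Nat.choose n (k i) : ℝ) = ((D i).card : ℝ) / (Nat.choose n r : ℝ) := by
      intro i hi
      rw [mem_filter] at hi
      rw [hi.2]
    rw [Finset.sum_congr rfl hre, ← Finset.sum_div]
    apply div_le_div_of_nonneg_right ?_ ?_ |>.trans (le_refl _)
    · -- numerator inequality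
      have hdisj : (((univ.filter (fun i => k i = r)) : Finset (Fin m)) : Set (Fin m)).PairwiseDisjoint D := by
        intro i _ j _ hij
        simp only [Finset.disjoint_left]
        intro B hBi hBj
        exact cross i j hij B B hBi hBj (le_refl _)
      have hcard : ∑ i ∈ univ.filter (fun i => k i = r), (D i).card
          = ((univ.filter (fun i => k i = r)).biUnion D).card :=
        (Finset.card_biUnion (fun i hi j hj hij => hdisj hi hj hij)).symm
      have hsubset : (univ.filter (fun i => k i = r)).biUnion D ⊆ 𝒜 # r := by
        intro B hB
        rw [mem_biUnion] at hB
        obtain ⟨i, hi, hBi⟩ := hB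
        rw [mem_filter] at hi
        rw [Finset.mem_slice]
        constructor
        · rw [h𝒜, mem_biUnion]; exact ⟨i, mem_univ i, hBi⟩
        · simp only [hD, mem_powersetCard] at hBi
          rw [hBi.2, hi.2]
      have : ∑ i ∈ univ.filter (fun i => k i = r), ((D i).card : ℝ) ≤ ((𝒜 # r).card : ℝ) := by
        rw [← Nat.cast_sum, hcard]
        exact_mod_cast card_le_card hsubset
      exact this
    · positivity
  have step3 : ∑ r ∈ range (n + 1), ((𝒜 # r).card : ℝ) / (Nat.choose n r : ℝ) ≤ 1 := by
    have := Finset.sum_card_slice_div_choose_le_one (𝕜 := ℝ) hanti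
    rwa [Fintype.card_fin] at this
  calc ∑ i, (b : ℝ) / (Nat.choose n (A i).card : ℝ)
      ≤ ∑ i : Fin m, ((D i).card : ℝ) / (Nat.choose n (k i) : ℝ) := Finset.sum_le_sum fun i _ => step1 i
    _ ≤ _ := step2
    _ ≤ 1 := step3
end

section
/- Let a ≥ 2 and n ≥ 1 be integers and let V be a 2-wise perfect subset of (Fin n → Fin a). Then: (i) for every v ∈ V and every c : Fin a, the fiber { r : Fin n | v r = c } has at least a elements; and (ii) for all distinct u, v ∈ V and all c, c' : Fin a, the set difference { r | u r = c } \ { r | v r = c' } has at least a − 1 elements. -/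
lemma pair_inj {a n : ℕ} {u v : Fin n → Fin a} (h : u ≠ v) :
    Function.Injective ![u, v] := by
  intro i j hij
  fin_cases i <;> fin_cases j <;>
    first
    | rfl
    | (exact absurd hij h)
    | (exact absurd hij.symm h)

theorem pairwise_perfect_fibers (a n : ℕ) (ha : 2 ≤ a) (hn : 1 ≤ n)
    (V : Finset (Fin n → Fin a)) (hV : TwisePerfect a 2 n V) :
    (∀ v ∈ V, ∀ c : Fin a,
      a ≤ (Finset.univ.filter (fun r : Fin n => v r = c)).card) ∧
    (∀ u ∈ V, ∀ v ∈ V, u ≠ v → ∀ c c' : Fin a,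
      a - 1 ≤ ((Finset.univ.filter (fun r : Fin n => u r = c)) \
        (Finset.univ.filter (fun r : Fin n => v r = c'))).card) := by
  obtain ⟨hcard, hperf⟩ := hV
  constructor
  · intro v hv c
    obtain ⟨u, hu, hune⟩ := Finset.exists_mem_ne (s := V) (by omega) v
    have key : ∀ d : Fin a, ∃ r : Fin n, v r = c ∧ u r = d := by
      intro d
      obtain ⟨r, hr⟩ := hperf ![v, u] (pair_inj (Ne.symm hune))
        (by intro j; fin_cases j <;> simpa) ![c, d]
      exact ⟨r, by simpa using hr 0, by simpa using hr 1⟩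
    choose f hf1 hf2 using key
    calc a = (Finset.univ : Finset (Fin a)).card := by simp
    _ ≤ _ := by
        apply Finset.card_le_card_of_injOn f
        · intro d _; simp [hf1 d]
        · intro d _ e _ hde
          rw [← hf2 d, ← hf2 e, hde]
  · intro u hu v hv huv c c'
    have key : ∀ d : Fin a, ∃ r : Fin n, u r = c ∧ v r = d := by
      intro d
      obtain ⟨r, hr⟩ := hperf ![u, v] (pair_inj huv)
        (by intro j; fin_cases j <;> simpa) ![c, d]
      exact ⟨r, by simpa using hr 0, by simpa using hr 1⟩
    choose f hf1 hf2 using key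
    calc a - 1 = (Finset.univ.erase c').card := by simp
    _ ≤ _ := by
        apply Finset.card_le_card_of_injOn f
        · intro d hd
          simp only [Finset.mem_coe, Finset.mem_erase, Finset.mem_univ, and_true] at hd
          simp [Finset.mem_sdiff, hf1 d, hf2 d, hd]
        · intro d _ e _ hde
          rw [← hf2 d, ← hf2 e, hde]
end
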